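/- arXiv:2507.22833 — 3 statements merged into one kernel-verified Lean document; each statement's English description precedes it below -/
import Mathlib

section
/- Let K be a real compact nc convex set and x ∈ K. Then x is maximal in K if and only if x + i0 is maximal in the complexification K_c. -/
open Matrix Filter Topology
open scoped RealInnerProductSpace ComplexOrder

noncomputable section

namespace NCC

/-! ## Matrix operations over a real module -/

def lmul {E : Type*} [AddCommMonoid E] [Module ℝ E] {m n p : ℕ}
    (a : Matrix (Fin m) (Fin n) ℝ) (x : Matrix (Fin n) (Fin p) E) :
    Matrix (Fin m) (Fin p) E :=
  Matrix.of fun i j => ∑ k, a i k • x k j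

def rmulE {E : Type*} [AddCommMonoid E] [Module ℝ E] {m n p : ℕ}
    (x : Matrix (Fin m) (Fin n) E) (a : Matrix (Fin n) (Fin p) ℝ) :
    Matrix (Fin m) (Fin p) E :=
  Matrix.of fun i j => ∑ k, a k j • x i k

/-- The compression `αᵀ x α` of `x ∈ M_n(E)` by `α ∈ M_{n,m}(ℝ)`. -/
def compress {E : Type*} [AddCommMonoid E] [Module ℝ E] {n m : ℕ}
    (α : Matrix (Fin n) (Fin m) ℝ) (x : Matrix (Fin n) (Fin n) E) :
    Matrix (Fin m) (Fin m) E :=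
  lmul α.transpose (rmulE x α)

/-- A real isometry matrix: `αᵀ α = 1`. -/
def IsIsometry {n m : ℕ} (α : Matrix (Fin n) (Fin m) ℝ) : Prop :=
  α.transpose * α = 1

/-- The direct sum `x ⊕ y` of matrices over `E`. -/
def dSum {E : Type*} [AddCommMonoid E] [Module ℝ E] {n m : ℕ}
    (x : Matrix (Fin n) (Fin n) E) (y : Matrix (Fin m) (Fin m) E) :
    Matrix (Fin (n + m)) (Fin (n + m)) E :=
  Matrix.reindex finSumFinEquiv finSumFinEquiv (Matrix.fromBlocks x 0 0 y)

/-- A real scalar matrix `p` commutes with a matrix `x` over `E`. -/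
def RComm {E : Type*} [AddCommMonoid E] [Module ℝ E] {n : ℕ}
    (p : Matrix (Fin n) (Fin n) ℝ) (x : Matrix (Fin n) (Fin n) E) : Prop :=
  lmul p x = rmulE x p

/-! ## Real nc convex sets -/

/-- A real nc convex set over the real operator space `E`, with (finite) matrix levels:
a graded family of sets closed under direct sums and isometric compressions. -/
structure NCConvexSet (E : Type*) [AddCommMonoid E] [Module ℝ E] where
  level : (n : ℕ) → Set (Matrix (Fin n) (Fin n) E)
  dSum_mem : ∀ {n m : ℕ} {x : Matrix (Fin n) (Fin n) E} {y : Matrix (Fin m) (Fin m) E},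
    x ∈ level n → y ∈ level m → dSum x y ∈ level (n + m)
  compress_mem : ∀ {n m : ℕ} (α : Matrix (Fin n) (Fin m) ℝ), IsIsometry α →
    ∀ {x : Matrix (Fin n) (Fin n) E}, x ∈ level n → compress α x ∈ level m

/-- Compactness of each level in the point-weak* topology (here: the given topology on `E`). -/
def NCConvexSet.IsCompactSet {E : Type*} [AddCommMonoid E] [Module ℝ E] [TopologicalSpace E]
    (K : NCConvexSet E) : Prop :=
  ∀ n, IsCompact (K.level n)

/-- The elements of `K` at level `m`. -/
abbrev NCConvexSet.Elem {E : Type*} [AddCommMonoid E] [Module ℝ E] (K : NCConvexSet E) (m : ℕ) :=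
  {x : Matrix (Fin m) (Fin m) E // x ∈ K.level m}

/-- `x` is maximal in `K` : every dilation of `x` is trivial. -/
def IsMaxIn {E : Type*} [AddCommMonoid E] [Module ℝ E] (K : NCConvexSet E) {n : ℕ}
    (x : Matrix (Fin n) (Fin n) E) : Prop :=
  ∀ {m : ℕ} (y : Matrix (Fin m) (Fin m) E) (α : Matrix (Fin m) (Fin n) ℝ),
    y ∈ K.level m → IsIsometry α → compress α y = x → RComm (α * α.transpose) y

/-- `x` is a pure point of `K`. -/
def IsPureIn {E : Type*} [AddCommMonoid E] [Module ℝ E] (K : NCConvexSet E) {n : ℕ}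
    (x : Matrix (Fin n) (Fin n) E) : Prop :=
  ∀ (N : ℕ) (d : Fin N → ℕ)
    (xs : ∀ i, Matrix (Fin (d i)) (Fin (d i)) E)
    (αs : ∀ i, Matrix (Fin (d i)) (Fin n) ℝ),
    (∀ i, xs i ∈ K.level (d i)) → (∀ i, αs i ≠ 0) →
    (∑ i, (αs i).transpose * αs i) = 1 →
    (∑ i, compress (αs i) (xs i)) = x →
    ∀ i, ∃ (c : ℝ) (β : Matrix (Fin (d i)) (Fin n) ℝ),
      0 < c ∧ IsIsometry β ∧ αs i = c • β ∧ compress β (xs i) = x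

/-- `x` is an extreme point of `K`. -/
def IsExtremeIn {E : Type*} [AddCommMonoid E] [Module ℝ E] (K : NCConvexSet E) {n : ℕ}
    (x : Matrix (Fin n) (Fin n) E) : Prop :=
  ∀ (N : ℕ) (d : Fin N → ℕ)
    (xs : ∀ i, Matrix (Fin (d i)) (Fin (d i)) E)
    (αs : ∀ i, Matrix (Fin (d i)) (Fin n) ℝ),
    (∀ i, xs i ∈ K.level (d i)) → (∀ i, αs i ≠ 0) →
    (∑ i, (αs i).transpose * αs i) = 1 →
    (∑ i, compress (αs i) (xs i)) = x →
    ∀ i, ∃ (c : ℝ) (β : Matrix (Fin (d i)) (Fin n) ℝ),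
      0 < c ∧ IsIsometry β ∧ αs i = c • β ∧ compress β (xs i) = x ∧
      RComm (β * β.transpose) (xs i)

/-! ## Complexification -/

/-- `c(x + iy) = [[x, -y], [y, x]]`. -/
def cMat {E : Type*} [AddCommGroup E] [Module ℝ E] {n : ℕ}
    (x y : Matrix (Fin n) (Fin n) E) : Matrix (Fin (n + n)) (Fin (n + n)) E :=
  Matrix.reindex finSumFinEquiv finSumFinEquiv (Matrix.fromBlocks x (-y) y x)

/-- A complex isometry matrix `a + ib` : `(a+ib)^*(a+ib) = 1`. -/
def IsCIsometry {n m : ℕ} (a b : Matrix (Fin n) (Fin m) ℝ) : Prop :=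
  a.transpose * a + b.transpose * b = 1 ∧ a.transpose * b - b.transpose * a = 0

/-- Complex compression `(a+ib)^* (x+iy) (a+ib)`, presented as a pair (real part, imaginary part). -/
def compressC {E : Type*} [AddCommGroup E] [Module ℝ E] {N m : ℕ}
    (a b : Matrix (Fin N) (Fin m) ℝ) (x y : Matrix (Fin N) (Fin N) E) :
    Matrix (Fin m) (Fin m) E × Matrix (Fin m) (Fin m) E :=
  (lmul a.transpose (rmulE x a - rmulE y b) + lmul b.transpose (rmulE y a + rmulE x b),
   lmul a.transpose (rmulE y a + rmulE x b) - lmul b.transpose (rmulE x a - rmulE y b))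

/-- The complex scalar matrix `pr + i·pim` commutes with `x + iy`. -/
def CCommC {E : Type*} [AddCommGroup E] [Module ℝ E] {N : ℕ}
    (pr pim : Matrix (Fin N) (Fin N) ℝ) (x y : Matrix (Fin N) (Fin N) E) : Prop :=
  (lmul pr x - lmul pim y = rmulE x pr - rmulE y pim) ∧
  (lmul pr y + lmul pim x = rmulE y pr + rmulE x pim)

/-- `x + iy ∈ K_c` is maximal with respect to dilations by complex isometries. -/
def IsCMaxInC {E : Type*} [AddCommGroup E] [Module ℝ E] (K : NCConvexSet E) {n : ℕ}
    (x y : Matrix (Fin n) (Fin n) E) : Prop :=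
  ∀ {m : ℕ} (z w : Matrix (Fin m) (Fin m) E) (a b : Matrix (Fin m) (Fin n) ℝ),
    cMat z w ∈ K.level (m + m) → IsCIsometry a b → compressC a b z w = (x, y) →
    CCommC (a * a.transpose + b * b.transpose) (b * a.transpose - a * b.transpose) z w

/-- `x + iy ∈ K_c` is maximal with respect to dilations by real isometries. -/
def IsRMaxInC {E : Type*} [AddCommGroup E] [Module ℝ E] (K : NCConvexSet E) {n : ℕ}
    (x y : Matrix (Fin n) (Fin n) E) : Prop :=
  ∀ {m : ℕ} (z w : Matrix (Fin m) (Fin m) E) (α : Matrix (Fin m) (Fin n) ℝ),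
    cMat z w ∈ K.level (m + m) → IsIsometry α → compressC α 0 z w = (x, y) →
    CCommC (α * α.transpose) 0 z w

/-- `x + iy` is a pure point of the complexification `K_c`. -/
def IsCPureInC {E : Type*} [AddCommGroup E] [Module ℝ E] (K : NCConvexSet E) {n : ℕ}
    (x y : Matrix (Fin n) (Fin n) E) : Prop :=
  ∀ (N : ℕ) (d : Fin N → ℕ)
    (xs ys : ∀ i, Matrix (Fin (d i)) (Fin (d i)) E)
    (as bs : ∀ i, Matrix (Fin (d i)) (Fin n) ℝ),
    (∀ i, cMat (xs i) (ys i) ∈ K.level (d i + d i)) →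
    (∀ i, ¬(as i = 0 ∧ bs i = 0)) →
    (∑ i, ((as i).transpose * as i + (bs i).transpose * bs i)) = 1 →
    (∑ i, ((as i).transpose * bs i - (bs i).transpose * as i)) = 0 →
    (∑ i, (compressC (as i) (bs i) (xs i) (ys i)).1) = x →
    (∑ i, (compressC (as i) (bs i) (xs i) (ys i)).2) = y →
    ∀ i, ∃ (c : ℝ) (βa βb : Matrix (Fin (d i)) (Fin n) ℝ),
      0 < c ∧ IsCIsometry βa βb ∧ as i = c • βa ∧ bs i = c • βb ∧
      compressC βa βb (xs i) (ys i) = (x, y)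

/-- `x + iy` is an extreme point of the complexification `K_c`. -/
def IsCExtremeInC {E : Type*} [AddCommGroup E] [Module ℝ E] (K : NCConvexSet E) {n : ℕ}
    (x y : Matrix (Fin n) (Fin n) E) : Prop :=
  ∀ (N : ℕ) (d : Fin N → ℕ)
    (xs ys : ∀ i, Matrix (Fin (d i)) (Fin (d i)) E)
    (as bs : ∀ i, Matrix (Fin (d i)) (Fin n) ℝ),
    (∀ i, cMat (xs i) (ys i) ∈ K.level (d i + d i)) →
    (∀ i, ¬(as i = 0 ∧ bs i = 0)) →
    (∑ i, ((as i).transpose * as i + (bs i).transpose * bs i)) = 1 →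
    (∑ i, ((as i).transpose * bs i - (bs i).transpose * as i)) = 0 →
    (∑ i, (compressC (as i) (bs i) (xs i) (ys i)).1) = x →
    (∑ i, (compressC (as i) (bs i) (xs i) (ys i)).2) = y →
    ∀ i, ∃ (c : ℝ) (βa βb : Matrix (Fin (d i)) (Fin n) ℝ),
      0 < c ∧ IsCIsometry βa βb ∧ as i = c • βa ∧ bs i = c • βb ∧
      compressC βa βb (xs i) (ys i) = (x, y) ∧
      CCommC (βa * βa.transpose + βb * βb.transpose)
        (βb * βa.transpose - βa * βb.transpose) (xs i) (ys i)

/-- `x` is complex-irreducible: every nonzero positive complex matrix commuting with `x`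
is a positive scalar multiple of the identity. -/
def CIrred {E : Type*} [AddCommGroup E] [Module ℝ E] {n : ℕ}
    (x : Matrix (Fin n) (Fin n) E) : Prop :=
  ∀ T : Matrix (Fin n) (Fin n) ℂ, T.PosSemidef → T ≠ 0 →
    RComm (T.map Complex.re) x → RComm (T.map Complex.im) x →
    ∃ c : ℝ, 0 < c ∧ T = (c : ℂ) • 1

/-- The closed nc convex hull of a graded set. -/
def closedNCHull {E' : Type*} [AddCommMonoid E'] [Module ℝ E'] [TopologicalSpace E']
    (X : ∀ m : ℕ, Set (Matrix (Fin m) (Fin m) E')) :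
    ∀ m : ℕ, Set (Matrix (Fin m) (Fin m) E') :=
  fun m => {z | ∀ L : NCConvexSet E', (∀ k, IsClosed (L.level k)) →
    (∀ k, X k ⊆ L.level k) → z ∈ L.level m}

/-- Bundled real topological vector space data (for existential statements). -/
structure RSpace where
  carrier : Type
  [grp : AddCommGroup carrier]
  [mod : Module ℝ carrier]
  [top : TopologicalSpace carrier]

attribute [instance] RSpace.grp RSpace.mod RSpace.top

end NCC
/-! ## NC functions -/

namespace NCC

/-- `1_n ⊗ U` : the amplification of a real scalar matrix. -/
def amp {n m k : ℕ} (U : Matrix (Fin m) (Fin k) ℝ) :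
    Matrix (Fin n × Fin m) (Fin n × Fin k) ℝ :=
  Matrix.of fun p q => if p.1 = q.1 then U p.2 q.2 else 0

/-- Direct sum of values of a (matrix-valued) nc function. -/
def dPair {n m k : ℕ} (A : Matrix (Fin n × Fin m) (Fin n × Fin m) ℝ)
    (B : Matrix (Fin n × Fin k) (Fin n × Fin k) ℝ) :
    Matrix (Fin n × Fin (m + k)) (Fin n × Fin (m + k)) ℝ :=
  Matrix.of fun p q =>
    Sum.elim
      (fun a => Sum.elim (fun b => A (p.1, a) (q.1, b)) (fun _ => (0 : ℝ))
        (finSumFinEquiv.symm q.2))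
      (fun a => Sum.elim (fun _ => (0 : ℝ)) (fun b => B (p.1, a) (q.1, b))
        (finSumFinEquiv.symm q.2))
      (finSumFinEquiv.symm p.2)

/-- A (bounded) nc function in `M_n(B(K))` : graded, unitarily equivariant,
respecting direct sums. -/
structure NCFun {E : Type*} [AddCommMonoid E] [Module ℝ E] (K : NCConvexSet E) (n : ℕ) where
  app : ∀ {m : ℕ}, K.Elem m → Matrix (Fin n × Fin m) (Fin n × Fin m) ℝ
  equivariant : ∀ {m : ℕ} (U : Matrix (Fin m) (Fin m) ℝ), U.transpose * U = 1 →
    U * U.transpose = 1 → ∀ (x y : K.Elem m), y.val = compress U.transpose x.val →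
    app y = amp (n := n) U * app x * amp (n := n) U.transpose
  dsum_eq : ∀ {m k : ℕ} (x : K.Elem m) (y : K.Elem k) (z : K.Elem (m + k)),
    z.val = dSum x.val y.val → app z = dPair (app x) (app y)

/-- Boundedness of an nc function (uniform bound on the operator norms of its values). -/
def NCFun.Bounded {E : Type*} [AddCommMonoid E] [Module ℝ E] {K : NCConvexSet E} {n : ℕ}
    (f : NCFun K n) : Prop :=
  ∃ C : ℝ, ∀ {m : ℕ} (x : K.Elem m) (v w : Fin n × Fin m → ℝ),
    |∑ p, ∑ q, w p * f.app x p q * v q| ≤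
      C * Real.sqrt (∑ p, v p ^ 2) * Real.sqrt (∑ p, w p ^ 2)

/-- Continuity of an nc function on each level of `K`. -/
def NCFun.ContinuousOnK {E : Type*} [AddCommMonoid E] [Module ℝ E] [TopologicalSpace E]
    {K : NCConvexSet E} {n : ℕ} (f : NCFun K n) : Prop :=
  ∀ m : ℕ, Continuous fun x : K.Elem m => f.app x

/-- Selfadjointness of an nc function. -/
def NCFun.SelfAdj {E : Type*} [AddCommMonoid E] [Module ℝ E] {K : NCConvexSet E} {n : ℕ}
    (f : NCFun K n) : Prop :=
  ∀ {m : ℕ} (x : K.Elem m), (f.app x).IsSymm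

/-- `C(K)` : the continuous bounded nc functions on `K` (scalar level). -/
def CFun {E : Type*} [AddCommMonoid E] [Module ℝ E] [TopologicalSpace E]
    (K : NCConvexSet E) : Type _ :=
  {f : NCFun K 1 // f.Bounded ∧ f.ContinuousOnK}

/-- Affine nc functions (the elements of `A(K)`). -/
def IsAffineF {E : Type*} [AddCommMonoid E] [Module ℝ E] {K : NCConvexSet E} {n : ℕ}
    (f : NCFun K n) : Prop :=
  ∀ {m k : ℕ} (α : Matrix (Fin m) (Fin k) ℝ), IsIsometry α →
    ∀ (x : K.Elem m) (y : K.Elem k), y.val = compress α x.val →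
    f.app y = (amp (n := n) α).transpose * f.app x * amp (n := n) α

/-- Positivity of a matrix of elements of `C(K)` : pointwise positive semidefiniteness. -/
def PosMatC {E : Type*} [AddCommMonoid E] [Module ℝ E] [TopologicalSpace E]
    {K : NCConvexSet E} {k : ℕ} (G : Matrix (Fin k) (Fin k) (CFun K)) : Prop :=
  ∀ {m : ℕ} (x : K.Elem m),
    (Matrix.of fun p q : Fin k × (Fin 1 × Fin m) =>
      ((G p.1 q.1).val.app x) p.2 q.2).PosSemidef

/-- A unital completely positive map `μ : C(K) → M_d(ℝ)`. -/
structure IsUcpC {E : Type*} [AddCommMonoid E] [Module ℝ E] [TopologicalSpace E]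
    {K : NCConvexSet E} {d : ℕ} (μ : CFun K → Matrix (Fin d) (Fin d) ℝ) : Prop where
  map_add : ∀ f g h : CFun K,
    (∀ {m : ℕ} (x : K.Elem m), h.val.app x = f.val.app x + g.val.app x) → μ h = μ f + μ g
  map_smul : ∀ (c : ℝ) (f g : CFun K),
    (∀ {m : ℕ} (x : K.Elem m), g.val.app x = c • f.val.app x) → μ g = c • μ f
  unital : ∀ f : CFun K, (∀ {m : ℕ} (x : K.Elem m), f.val.app x = 1) → μ f = 1
  cp : ∀ (k : ℕ) (G : Matrix (Fin k) (Fin k) (CFun K)), PosMatC G →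
    (Matrix.of fun p q : Fin k × Fin d => μ (G p.1 q.1) p.2 q.2).PosSemidef

/-- Strip the trivial `Fin 1` factor from the value of a scalar-level nc function. -/
def sqMat {m : ℕ} (A : Matrix (Fin 1 × Fin m) (Fin 1 × Fin m) ℝ) :
    Matrix (Fin m) (Fin m) ℝ :=
  Matrix.of fun p q => A (0, p) (0, q)

/-- The point evaluation `δ_x : C(K) → M_m(ℝ)`. -/
def deltaAt {E : Type*} [AddCommMonoid E] [Module ℝ E] [TopologicalSpace E]
    {K : NCConvexSet E} {m : ℕ} (x : K.Elem m) :
    CFun K → Matrix (Fin m) (Fin m) ℝ :=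
  fun f => sqMat (f.val.app x)

/-- `μ` has barycenter `x` : `μ` restricted to `A(K)` is (evaluation at) `x`. -/
def HasBarycenter {E : Type*} [AddCommMonoid E] [Module ℝ E] [TopologicalSpace E]
    {K : NCConvexSet E} {d : ℕ} (μ : CFun K → Matrix (Fin d) (Fin d) ℝ)
    (x : K.Elem d) : Prop :=
  ∀ f : CFun K, IsAffineF f.val → μ f = deltaAt x f

/-- View a map `C(K) → M_d(ℝ)` as a `d × d` matrix over the dual-type `C(K) → ℝ`. -/
def toMatFun {E : Type*} [AddCommMonoid E] [Module ℝ E] [TopologicalSpace E]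
    {K : NCConvexSet E} {d : ℕ} (μ : CFun K → Matrix (Fin d) (Fin d) ℝ) :
    Matrix (Fin d) (Fin d) (CFun K → ℝ) :=
  Matrix.of fun i j f => μ f i j

/-! ## Epigraphs, convexity, lower semicontinuity of nc functions -/

/-- The epigraph of a selfadjoint nc function. -/
def RealEpi {E : Type*} [AddCommGroup E] [Module ℝ E] {K : NCConvexSet E} {n : ℕ}
    (f : NCFun K n) (m : ℕ) :
    Set (Matrix (Fin m) (Fin m) E × Matrix (Fin n × Fin m) (Fin n × Fin m) ℝ) :=
  {z | ∃ h : z.1 ∈ K.level m, z.2.IsSymm ∧ (z.2 - f.app ⟨z.1, h⟩).PosSemidef}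

/-- `f` is nc convex: its epigraph is an nc convex set. -/
def IsConvexF {E : Type*} [AddCommGroup E] [Module ℝ E] {K : NCConvexSet E} {n : ℕ}
    (f : NCFun K n) : Prop :=
  (∀ {m k : ℕ} (z : Matrix (Fin m) (Fin m) E × Matrix (Fin n × Fin m) (Fin n × Fin m) ℝ)
      (w : Matrix (Fin k) (Fin k) E × Matrix (Fin n × Fin k) (Fin n × Fin k) ℝ),
    z ∈ RealEpi f m → w ∈ RealEpi f k →
    (dSum z.1 w.1, dPair z.2 w.2) ∈ RealEpi f (m + k)) ∧
  (∀ {m k : ℕ} (γ : Matrix (Fin m) (Fin k) ℝ), IsIsometry γ →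
    ∀ z ∈ RealEpi f m,
      (compress γ z.1, (amp (n := n) γ).transpose * z.2 * amp (n := n) γ) ∈ RealEpi f k)

/-- `f` is lower semicontinuous: its epigraph is closed. -/
def IsLscF {E : Type*} [AddCommGroup E] [Module ℝ E] [TopologicalSpace E]
    {K : NCConvexSet E} {n : ℕ} (f : NCFun K n) : Prop :=
  ∀ m, IsClosed (RealEpi f m)

/-! ## The complexification of nc functions -/

/-- The elements of the complexification `K_c` at level `m`, as pairs `x + iy`. -/
def KcElem {E : Type*} [AddCommGroup E] [Module ℝ E] (K : NCConvexSet E) (m : ℕ) :=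
  {p : Matrix (Fin m) (Fin m) E × Matrix (Fin m) (Fin m) E // cMat p.1 p.2 ∈ K.level (m + m)}

def inL {m : ℕ} (p : Fin m) : Fin (m + m) := finSumFinEquiv (Sum.inl p)
def inR {m : ℕ} (p : Fin m) : Fin (m + m) := finSumFinEquiv (Sum.inr p)

/-- Real part of `u_m^* A u_m` for `A` a value at `c(x,y)`. -/
def fcReMat {n m : ℕ} (A : Matrix (Fin n × Fin (m + m)) (Fin n × Fin (m + m)) ℝ) :
    Matrix (Fin n × Fin m) (Fin n × Fin m) ℝ :=
  Matrix.of fun a b =>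
    (A (a.1, inL a.2) (b.1, inL b.2) + A (a.1, inR a.2) (b.1, inR b.2)) / 2

/-- Imaginary part of `u_m^* A u_m` for `A` a value at `c(x,y)`. -/
def fcImMat {n m : ℕ} (A : Matrix (Fin n × Fin (m + m)) (Fin n × Fin (m + m)) ℝ) :
    Matrix (Fin n × Fin m) (Fin n × Fin m) ℝ :=
  Matrix.of fun a b =>
    (A (a.1, inR a.2) (b.1, inL b.2) - A (a.1, inL a.2) (b.1, inR b.2)) / 2

/-- Real part of the complexification `f_c(x+iy) = u^* f(c(x,y)) u`. -/
def fcRe {E : Type*} [AddCommGroup E] [Module ℝ E] {K : NCConvexSet E} {n : ℕ}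
    (f : NCFun K n) {m : ℕ} (p : KcElem K m) :
    Matrix (Fin n × Fin m) (Fin n × Fin m) ℝ :=
  fcReMat (f.app ⟨cMat p.val.1 p.val.2, p.property⟩)

/-- Imaginary part of the complexification `f_c(x+iy) = u^* f(c(x,y)) u`. -/
def fcIm {E : Type*} [AddCommGroup E] [Module ℝ E] {K : NCConvexSet E} {n : ℕ}
    (f : NCFun K n) {m : ℕ} (p : KcElem K m) :
    Matrix (Fin n × Fin m) (Fin n × Fin m) ℝ :=
  fcImMat (f.app ⟨cMat p.val.1 p.val.2, p.property⟩)

/-- Positive semidefiniteness of the complex matrix `R + iI`, via its real picture. -/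
def PosSemidefC {ι : Type*} [Fintype ι] [DecidableEq ι] (R I : Matrix ι ι ℝ) : Prop :=
  (Matrix.fromBlocks R (-I) I R).PosSemidef

/-- Complex compression of a complex matrix value `(R, I)` by the complex
matrix `1_n ⊗ (a + ib)`. -/
def cpCompress {n m k : ℕ} (a b : Matrix (Fin m) (Fin k) ℝ)
    (R I : Matrix (Fin n × Fin m) (Fin n × Fin m) ℝ) :
    Matrix (Fin n × Fin k) (Fin n × Fin k) ℝ × Matrix (Fin n × Fin k) (Fin n × Fin k) ℝ :=
  ((amp (n := n) a).transpose * (R * amp (n := n) a - I * amp (n := n) b) +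
      (amp (n := n) b).transpose * (I * amp (n := n) a + R * amp (n := n) b),
   (amp (n := n) a).transpose * (I * amp (n := n) a + R * amp (n := n) b) -
      (amp (n := n) b).transpose * (R * amp (n := n) a - I * amp (n := n) b))

/-- The epigraph of the complexification `f_c` on `K_c`. -/
def CEpi {E : Type*} [AddCommGroup E] [Module ℝ E] {K : NCConvexSet E} {n : ℕ}
    (f : NCFun K n) (m : ℕ) :
    Set ((Matrix (Fin m) (Fin m) E × Matrix (Fin m) (Fin m) E) ×
      (Matrix (Fin n × Fin m) (Fin n × Fin m) ℝ × Matrix (Fin n × Fin m) (Fin n × Fin m) ℝ)) :=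
  {z | ∃ h : cMat z.1.1 z.1.2 ∈ K.level (m + m),
    z.2.1.IsSymm ∧ z.2.2.transpose = -z.2.2 ∧
    PosSemidefC (z.2.1 - fcRe f ⟨z.1, h⟩) (z.2.2 - fcIm f ⟨z.1, h⟩)}

/-- `f_c` is complex nc convex: its epigraph is a complex nc convex set. -/
def IsCConvexF {E : Type*} [AddCommGroup E] [Module ℝ E] {K : NCConvexSet E} {n : ℕ}
    (f : NCFun K n) : Prop :=
  (∀ {m k : ℕ}
      (z : (Matrix (Fin m) (Fin m) E × Matrix (Fin m) (Fin m) E) ×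
        (Matrix (Fin n × Fin m) (Fin n × Fin m) ℝ × Matrix (Fin n × Fin m) (Fin n × Fin m) ℝ))
      (w : (Matrix (Fin k) (Fin k) E × Matrix (Fin k) (Fin k) E) ×
        (Matrix (Fin n × Fin k) (Fin n × Fin k) ℝ × Matrix (Fin n × Fin k) (Fin n × Fin k) ℝ)),
    z ∈ CEpi f m → w ∈ CEpi f k →
    ((dSum z.1.1 w.1.1, dSum z.1.2 w.1.2), (dPair z.2.1 w.2.1, dPair z.2.2 w.2.2))
      ∈ CEpi f (m + k)) ∧
  (∀ {m k : ℕ} (a b : Matrix (Fin m) (Fin k) ℝ), IsCIsometry a b →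
    ∀ z ∈ CEpi f m,
      (compressC a b z.1.1 z.1.2, cpCompress a b z.2.1 z.2.2) ∈ CEpi f k)

/-- `f_c` is complex lower semicontinuous: its epigraph is closed. -/
def IsCLscF {E : Type*} [AddCommGroup E] [Module ℝ E] [TopologicalSpace E]
    {K : NCConvexSet E} {n : ℕ} (f : NCFun K n) : Prop :=
  ∀ m, IsClosed (CEpi f m)

end NCC
/-! ## Multivalued nc functions and convex envelopes -/

namespace NCC

/-- A bounded selfadjoint multivalued nc function `F : K → M_n(𝓜(ℝ))`. -/
structure MVFun {E : Type*} [AddCommGroup E] [Module ℝ E] (K : NCConvexSet E) (n : ℕ) where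
  app : ∀ {m : ℕ}, K.Elem m → Set (Matrix (Fin n × Fin m) (Fin n × Fin m) ℝ)
  symm_mem : ∀ {m : ℕ} (x : K.Elem m) {α}, α ∈ app x → α.IsSymm
  upward : ∀ {m : ℕ} (x : K.Elem m) {α β}, α ∈ app x → β.IsSymm →
    (β - α).PosSemidef → β ∈ app x
  directed : ∀ {m : ℕ} (x : K.Elem m) {α β}, α ∈ app x → β ∈ app x →
    ∃ γ ∈ app x, (γ - α).PosSemidef ∧ (γ - β).PosSemidef
  equivariant : ∀ {m : ℕ} (U : Matrix (Fin m) (Fin m) ℝ), U.transpose * U = 1 →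
    U * U.transpose = 1 → ∀ (x y : K.Elem m), y.val = compress U.transpose x.val →
    app y = (fun A => amp (n := n) U * A * amp (n := n) U.transpose) '' app x
  dsum_mem : ∀ {m k : ℕ} (x : K.Elem m) (y : K.Elem k) (z : K.Elem (m + k)),
    z.val = dSum x.val y.val → ∀ {A B}, A ∈ app x → B ∈ app y → dPair A B ∈ app z
  bounded : ∃ lam : ℝ, 0 < lam ∧ ∀ {m : ℕ} (x : K.Elem m) {β}, β ∈ app x →
    ∃ α ∈ app x, (β - α).PosSemidef ∧
      (lam • (1 : Matrix (Fin n × Fin m) (Fin n × Fin m) ℝ) - α).PosSemidef ∧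
      (α + lam • (1 : Matrix (Fin n × Fin m) (Fin n × Fin m) ℝ)).PosSemidef

/-- The graph of a multivalued nc function. -/
def MVGraph {E : Type*} [AddCommGroup E] [Module ℝ E] {K : NCConvexSet E} {n : ℕ}
    (F : MVFun K n) (m : ℕ) :
    Set (Matrix (Fin m) (Fin m) E × Matrix (Fin n × Fin m) (Fin n × Fin m) ℝ) :=
  {z | ∃ h : z.1 ∈ K.level m, z.2 ∈ F.app ⟨z.1, h⟩}

/-- The closed nc convex hull of a graded family of graphs/epigraphs. -/
def pairHull {E : Type*} [AddCommGroup E] [Module ℝ E] [TopologicalSpace E] {n : ℕ}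
    (X : ∀ m : ℕ, Set (Matrix (Fin m) (Fin m) E × Matrix (Fin n × Fin m) (Fin n × Fin m) ℝ)) :
    ∀ m : ℕ, Set (Matrix (Fin m) (Fin m) E × Matrix (Fin n × Fin m) (Fin n × Fin m) ℝ) :=
  fun m => {z | ∀ Y : ∀ k : ℕ,
      Set (Matrix (Fin k) (Fin k) E × Matrix (Fin n × Fin k) (Fin n × Fin k) ℝ),
    (∀ k, IsClosed (Y k)) →
    (∀ {k l : ℕ} (a : Matrix (Fin k) (Fin k) E × Matrix (Fin n × Fin k) (Fin n × Fin k) ℝ)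
        (b : Matrix (Fin l) (Fin l) E × Matrix (Fin n × Fin l) (Fin n × Fin l) ℝ),
      a ∈ Y k → b ∈ Y l → (dSum a.1 b.1, dPair a.2 b.2) ∈ Y (k + l)) →
    (∀ {k l : ℕ} (γ : Matrix (Fin k) (Fin l) ℝ), IsIsometry γ →
      ∀ a ∈ Y k, (compress γ a.1, (amp (n := n) γ).transpose * a.2 * amp (n := n) γ) ∈ Y l) →
    (∀ k, X k ⊆ Y k) → z ∈ Y m}

/-- The value set of the complexification `F_c(x + iy) = u^* F(c(x,y)) u`. -/
def FcSet {E : Type*} [AddCommGroup E] [Module ℝ E] {K : NCConvexSet E} {n : ℕ}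
    (F : MVFun K n) {m : ℕ} (p : KcElem K m) :
    Set (Matrix (Fin n × Fin m) (Fin n × Fin m) ℝ × Matrix (Fin n × Fin m) (Fin n × Fin m) ℝ) :=
  {RI | ∃ A ∈ F.app ⟨cMat p.val.1 p.val.2, p.property⟩, RI = (fcReMat A, fcImMat A)}

/-- The graph of a complex multivalued function on `K_c`, given as a set-valued assignment. -/
def CMVGraph {E : Type*} [AddCommGroup E] [Module ℝ E] {K : NCConvexSet E} {n : ℕ}
    (G : ∀ m : ℕ, KcElem K m →
      Set (Matrix (Fin n × Fin m) (Fin n × Fin m) ℝ × Matrix (Fin n × Fin m) (Fin n × Fin m) ℝ))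
    (m : ℕ) :
    Set ((Matrix (Fin m) (Fin m) E × Matrix (Fin m) (Fin m) E) ×
      (Matrix (Fin n × Fin m) (Fin n × Fin m) ℝ × Matrix (Fin n × Fin m) (Fin n × Fin m) ℝ)) :=
  {z | ∃ h : cMat z.1.1 z.1.2 ∈ K.level (m + m), z.2 ∈ G m ⟨z.1, h⟩}

/-- The closed complex nc convex hull of a graded family of complex graphs. -/
def cPairHull {E : Type*} [AddCommGroup E] [Module ℝ E] [TopologicalSpace E] {n : ℕ}
    (X : ∀ m : ℕ, Set ((Matrix (Fin m) (Fin m) E × Matrix (Fin m) (Fin m) E) ×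
      (Matrix (Fin n × Fin m) (Fin n × Fin m) ℝ × Matrix (Fin n × Fin m) (Fin n × Fin m) ℝ))) :
    ∀ m : ℕ, Set ((Matrix (Fin m) (Fin m) E × Matrix (Fin m) (Fin m) E) ×
      (Matrix (Fin n × Fin m) (Fin n × Fin m) ℝ × Matrix (Fin n × Fin m) (Fin n × Fin m) ℝ)) :=
  fun m => {z | ∀ Y : ∀ k : ℕ,
      Set ((Matrix (Fin k) (Fin k) E × Matrix (Fin k) (Fin k) E) ×
        (Matrix (Fin n × Fin k) (Fin n × Fin k) ℝ × Matrix (Fin n × Fin k) (Fin n × Fin k) ℝ)),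
    (∀ k, IsClosed (Y k)) →
    (∀ {k l : ℕ}
        (a : (Matrix (Fin k) (Fin k) E × Matrix (Fin k) (Fin k) E) ×
          (Matrix (Fin n × Fin k) (Fin n × Fin k) ℝ × Matrix (Fin n × Fin k) (Fin n × Fin k) ℝ))
        (b : (Matrix (Fin l) (Fin l) E × Matrix (Fin l) (Fin l) E) ×
          (Matrix (Fin n × Fin l) (Fin n × Fin l) ℝ × Matrix (Fin n × Fin l) (Fin n × Fin l) ℝ)),
      a ∈ Y k → b ∈ Y l →
      ((dSum a.1.1 b.1.1, dSum a.1.2 b.1.2), (dPair a.2.1 b.2.1, dPair a.2.2 b.2.2))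
        ∈ Y (k + l)) →
    (∀ {k l : ℕ} (γa γb : Matrix (Fin k) (Fin l) ℝ), IsCIsometry γa γb →
      ∀ a ∈ Y k, (compressC γa γb a.1.1 a.1.2, cpCompress γa γb a.2.1 a.2.2) ∈ Y l) →
    (∀ k, X k ⊆ Y k) → z ∈ Y m}

end NCC
/-! ## Real Hilbert spaces, operator systems and ucp maps -/

namespace NCC

/-- Bundled real Hilbert space. -/
structure HilbertR where
  carrier : Type
  [nacg : NormedAddCommGroup carrier]
  [ipr : InnerProductSpace ℝ carrier]
  [cs : CompleteSpace carrier]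

attribute [instance] HilbertR.nacg HilbertR.ipr HilbertR.cs

/-- Bundled compact Hausdorff space. -/
structure CompactT2 where
  carrier : Type
  [ts : TopologicalSpace carrier]
  [cpt : CompactSpace carrier]
  [t2 : T2Space carrier]

attribute [instance] CompactT2.ts CompactT2.cpt CompactT2.t2

/-- The real inner product. -/
def rip {H : Type*} [NormedAddCommGroup H] [InnerProductSpace ℝ H] (x y : H) : ℝ :=
  inner ℝ x y

/-- Positivity of a matrix of Hilbert space operators. -/
def OpMatPos {H : Type*} [NormedAddCommGroup H] [InnerProductSpace ℝ H] {k : ℕ}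
    (T : Matrix (Fin k) (Fin k) (H →L[ℝ] H)) : Prop :=
  (∀ (i j : Fin k) (ξ η : H), rip (T i j ξ) (η) = rip (ξ) (T j i η)) ∧
  ∀ v : Fin k → H, 0 ≤ ∑ i, ∑ j, rip (T i j (v j)) (v i)

/-- An isometry between real inner product spaces. -/
def IsIsometryOp {H W : Type*} [NormedAddCommGroup H] [InnerProductSpace ℝ H]
    [NormedAddCommGroup W] [InnerProductSpace ℝ W] (ι : H →L[ℝ] W) : Prop :=
  ∀ ξ η : H, rip (ι ξ) (ι η) = rip (ξ) (η)

section OS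

variable {H : Type*} [NormedAddCommGroup H] [InnerProductSpace ℝ H] [CompleteSpace H]

/-- A unital completely positive map on a (concrete) real operator system `V ⊆ B(H)`. -/
def IsUcpOS (V : Submodule ℝ (H →L[ℝ] H)) {W : Type*} [NormedAddCommGroup W]
    [InnerProductSpace ℝ W] [CompleteSpace W] (φ : V → (W →L[ℝ] W)) : Prop :=
  (∀ u v : V, φ (u + v) = φ u + φ v) ∧
  (∀ (c : ℝ) (v : V), φ (c • v) = c • φ v) ∧
  (∀ v : V, (v : H →L[ℝ] H) = 1 → φ v = 1) ∧
  (∀ (k : ℕ) (T : Matrix (Fin k) (Fin k) V),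
    OpMatPos (Matrix.of fun i j => (T i j : H →L[ℝ] H)) →
    OpMatPos (Matrix.of fun i j => φ (T i j)))

/-- `ψ` (on `L`) dilates `φ` (on `W`) via the isometry `ι : W → L`. -/
def DilatesOS {V : Submodule ℝ (H →L[ℝ] H)} {W L : Type*}
    [NormedAddCommGroup W] [InnerProductSpace ℝ W] [CompleteSpace W]
    [NormedAddCommGroup L] [InnerProductSpace ℝ L] [CompleteSpace L]
    (φ : V → (W →L[ℝ] W)) (ψ : V → (L →L[ℝ] L)) (ι : W →L[ℝ] L) : Prop :=
  IsIsometryOp ι ∧ ∀ (v : V) (ξ η : W), rip (ψ v (ι ξ)) (ι η) = rip (φ v ξ) (η)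

/-- `φ` is a maximal ucp map: every dilation of it is trivial. -/
def IsMaximalOS (V : Submodule ℝ (H →L[ℝ] H)) {W : Type*}
    [NormedAddCommGroup W] [InnerProductSpace ℝ W] [CompleteSpace W]
    (φ : V → (W →L[ℝ] W)) : Prop :=
  ∀ (L : HilbertR) (ψ : V → (L.carrier →L[ℝ] L.carrier)) (ι : W →L[ℝ] L.carrier),
    IsUcpOS V ψ → DilatesOS φ ψ ι → ∀ v : V,
      Commute (ψ v) (ι.comp (ContinuousLinearMap.adjoint ι))

/-- `φ` is a pure ucp map on the operator system `V`. -/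
def IsPureOS (V : Submodule ℝ (H →L[ℝ] H)) {W : Type*}
    [NormedAddCommGroup W] [InnerProductSpace ℝ W] [CompleteSpace W]
    (φ : V → (W →L[ℝ] W)) : Prop :=
  ∀ (N : ℕ) (Ls : Fin N → HilbertR)
    (ψs : ∀ i, V → ((Ls i).carrier →L[ℝ] (Ls i).carrier))
    (ιs : ∀ i, W →L[ℝ] (Ls i).carrier),
    (∀ i, IsUcpOS V (ψs i)) → (∀ i, ιs i ≠ 0) →
    (∑ i, (ContinuousLinearMap.adjoint (ιs i)).comp (ιs i)) = 1 →
    (∀ v : V, φ v = ∑ i, (ContinuousLinearMap.adjoint (ιs i)).comp ((ψs i v).comp (ιs i))) →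
    ∀ i, ∃ (c : ℝ) (β : W →L[ℝ] (Ls i).carrier), 0 < c ∧ IsIsometryOp β ∧
      ιs i = c • β ∧
      ∀ v : V, φ v = (ContinuousLinearMap.adjoint β).comp ((ψs i v).comp β)

/-- `φ` is an extreme ucp map on the operator system `V`. -/
def IsExtremeOS (V : Submodule ℝ (H →L[ℝ] H)) {W : Type*}
    [NormedAddCommGroup W] [InnerProductSpace ℝ W] [CompleteSpace W]
    (φ : V → (W →L[ℝ] W)) : Prop :=
  ∀ (N : ℕ) (Ls : Fin N → HilbertR)
    (ψs : ∀ i, V → ((Ls i).carrier →L[ℝ] (Ls i).carrier))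
    (ιs : ∀ i, W →L[ℝ] (Ls i).carrier),
    (∀ i, IsUcpOS V (ψs i)) → (∀ i, ιs i ≠ 0) →
    (∑ i, (ContinuousLinearMap.adjoint (ιs i)).comp (ιs i)) = 1 →
    (∀ v : V, φ v = ∑ i, (ContinuousLinearMap.adjoint (ιs i)).comp ((ψs i v).comp (ιs i))) →
    ∀ i, ∃ (c : ℝ) (β : W →L[ℝ] (Ls i).carrier), 0 < c ∧ IsIsometryOp β ∧
      ιs i = c • β ∧
      (∀ v : V, φ v = (ContinuousLinearMap.adjoint β).comp ((ψs i v).comp β)) ∧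
      ∀ v : V, Commute (ψs i v) (β.comp (ContinuousLinearMap.adjoint β))

end OS

section CA

variable (A : Type*) [NormedRing A] [StarRing A] [CStarRing A] [NormedAlgebra ℝ A]
  [CompleteSpace A] [StarModule ℝ A]

/-- Positivity of a matrix over a real C*-algebra. -/
def AMatPos {k : ℕ} (M : Matrix (Fin k) (Fin k) A) : Prop :=
  ∃ b : Matrix (Fin k) (Fin k) A, M = star b * b

/-- A unital completely positive map on the real C*-algebra `A`. -/
def IsUcpCA {W : Type*} [NormedAddCommGroup W] [InnerProductSpace ℝ W] [CompleteSpace W]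
    (φ : A → (W →L[ℝ] W)) : Prop :=
  (∀ a b : A, φ (a + b) = φ a + φ b) ∧
  (∀ (c : ℝ) (a : A), φ (c • a) = c • φ a) ∧
  φ 1 = 1 ∧
  ∀ (k : ℕ) (M : Matrix (Fin k) (Fin k) A), AMatPos A M →
    OpMatPos (Matrix.of fun i j => φ (M i j))

/-- A unital *-representation of `A` on a real Hilbert space. -/
def IsStarRepA {W : Type*} [NormedAddCommGroup W] [InnerProductSpace ℝ W] [CompleteSpace W]
    (π : A → (W →L[ℝ] W)) : Prop :=
  (∀ a b : A, π (a + b) = π a + π b) ∧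
  (∀ (c : ℝ) (a : A), π (c • a) = c • π a) ∧
  π 1 = 1 ∧
  (∀ a b : A, π (a * b) = (π a).comp (π b)) ∧
  (∀ a : A, π (star a) = star (π a))

/-- Irreducibility: the selfadjoint part of the commutant is trivial. -/
def IsIrredA {W : Type*} [NormedAddCommGroup W] [InnerProductSpace ℝ W] [CompleteSpace W]
    (π : A → (W →L[ℝ] W)) : Prop :=
  ∀ T : W →L[ℝ] W, IsSelfAdjoint T → (∀ a : A, Commute T (π a)) →
    ∃ c : ℝ, T = c • (1 : W →L[ℝ] W)

/-- `ψ` dilates `φ` via the isometry `ι` (C*-algebra version). -/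
def DilatesCA {W L : Type*}
    [NormedAddCommGroup W] [InnerProductSpace ℝ W] [CompleteSpace W]
    [NormedAddCommGroup L] [InnerProductSpace ℝ L] [CompleteSpace L]
    (φ : A → (W →L[ℝ] W)) (ψ : A → (L →L[ℝ] L)) (ι : W →L[ℝ] L) : Prop :=
  IsIsometryOp ι ∧ ∀ (a : A) (ξ η : W), rip (ψ a (ι ξ)) (ι η) = rip (φ a ξ) (η)

/-- `φ` is a maximal ucp map on the C*-algebra `A`. -/
def IsMaximalCA {W : Type*} [NormedAddCommGroup W] [InnerProductSpace ℝ W] [CompleteSpace W]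
    (φ : A → (W →L[ℝ] W)) : Prop :=
  ∀ (L : HilbertR) (ψ : A → (L.carrier →L[ℝ] L.carrier)) (ι : W →L[ℝ] L.carrier),
    IsUcpCA A ψ → DilatesCA A φ ψ ι → ∀ a : A,
      Commute (ψ a) (ι.comp (ContinuousLinearMap.adjoint ι))

/-- `φ` is a pure ucp map on the C*-algebra `A`. -/
def IsPureCA {W : Type*} [NormedAddCommGroup W] [InnerProductSpace ℝ W] [CompleteSpace W]
    (φ : A → (W →L[ℝ] W)) : Prop :=
  ∀ (N : ℕ) (Ls : Fin N → HilbertR)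
    (ψs : ∀ i, A → ((Ls i).carrier →L[ℝ] (Ls i).carrier))
    (ιs : ∀ i, W →L[ℝ] (Ls i).carrier),
    (∀ i, IsUcpCA A (ψs i)) → (∀ i, ιs i ≠ 0) →
    (∑ i, (ContinuousLinearMap.adjoint (ιs i)).comp (ιs i)) = 1 →
    (∀ a : A, φ a = ∑ i, (ContinuousLinearMap.adjoint (ιs i)).comp ((ψs i a).comp (ιs i))) →
    ∀ i, ∃ (c : ℝ) (β : W →L[ℝ] (Ls i).carrier), 0 < c ∧ IsIsometryOp β ∧
      ιs i = c • β ∧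
      ∀ a : A, φ a = (ContinuousLinearMap.adjoint β).comp ((ψs i a).comp β)

/-- `φ` is an extreme ucp map on the C*-algebra `A`. -/
def IsExtremeCA {W : Type*} [NormedAddCommGroup W] [InnerProductSpace ℝ W] [CompleteSpace W]
    (φ : A → (W →L[ℝ] W)) : Prop :=
  ∀ (N : ℕ) (Ls : Fin N → HilbertR)
    (ψs : ∀ i, A → ((Ls i).carrier →L[ℝ] (Ls i).carrier))
    (ιs : ∀ i, W →L[ℝ] (Ls i).carrier),
    (∀ i, IsUcpCA A (ψs i)) → (∀ i, ιs i ≠ 0) →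
    (∑ i, (ContinuousLinearMap.adjoint (ιs i)).comp (ιs i)) = 1 →
    (∀ a : A, φ a = ∑ i, (ContinuousLinearMap.adjoint (ιs i)).comp ((ψs i a).comp (ιs i))) →
    ∀ i, ∃ (c : ℝ) (β : W →L[ℝ] (Ls i).carrier), 0 < c ∧ IsIsometryOp β ∧
      ιs i = c • β ∧
      (∀ a : A, φ a = (ContinuousLinearMap.adjoint β).comp ((ψs i a).comp β)) ∧
      ∀ a : A, Commute (ψs i a) (β.comp (ContinuousLinearMap.adjoint β))

end CA

/-- The operator norm of a matrix of Hilbert space operators, described via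
inner products against pairs of unit vectors. -/
def blockNorm {H : Type*} [NormedAddCommGroup H] [InnerProductSpace ℝ H] {k : ℕ}
    (T : Matrix (Fin k) (Fin k) (H →L[ℝ] H)) : ℝ :=
  sSup {r : ℝ | ∃ v w : (Fin k → H), (∑ i, ‖v i‖ ^ 2) ≤ 1 ∧ (∑ i, ‖w i‖ ^ 2) ≤ 1 ∧
    r = |∑ i, ∑ j, rip (T i j (v j)) (w i)|}

end NCC
namespace NCC

/-!
Under `c`, a complex dilation `z + iw` of `x + i0` by the isometry `a + ib` becomes the real
dilation `c(z, w)` of `c(x, 0) = x ⊕ x` by the isometry `c(a + ib)`. A direct sum of maximal points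
is maximal, and `c(a + ib) c(a + ib)ᵀ` commuting with `c(z, w)` says exactly that
`(a + ib)(a + ib)*` commutes with `z + iw`. Conversely, a real dilation `y` of `x` by `α` gives the
complex dilation `y + i0` of `x + i0` by `α + i0`.

Linear functionals separate the points of `E`, so identities between `E`-valued matrices reduce to
identities between real matrices, on which `c` is multiplicative and turns `ᵀ` into `*`.
-/

variable {E : Type*} [AddCommGroup E] [Module ℝ E]

theorem map_lmul {m k p : ℕ} (a : Matrix (Fin m) (Fin k) ℝ) (x : Matrix (Fin k) (Fin p) E)
    (φ : Module.Dual ℝ E) : (lmul a x).map φ = a * x.map φ := by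
  ext i j; simp [lmul, Matrix.mul_apply]

theorem map_rmulE {m k p : ℕ} (x : Matrix (Fin m) (Fin k) E) (a : Matrix (Fin k) (Fin p) ℝ)
    (φ : Module.Dual ℝ E) : (rmulE x a).map φ = x.map φ * a := by
  ext i j; simp [rmulE, Matrix.mul_apply, mul_comm]

theorem map_compress {n m : ℕ} (α : Matrix (Fin n) (Fin m) ℝ) (x : Matrix (Fin n) (Fin n) E)
    (φ : Module.Dual ℝ E) : (compress α x).map φ = αᵀ * x.map φ * α := by
  rw [compress, map_lmul, map_rmulE, Matrix.mul_assoc]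

theorem map_cMat {n : ℕ} (x y : Matrix (Fin n) (Fin n) E) (φ : Module.Dual ℝ E) :
    (cMat x y).map φ = cMat (x.map φ) (y.map φ) := by
  simp only [cMat, Matrix.reindex_apply, ← Matrix.submatrix_map, Matrix.fromBlocks_map,
    Matrix.map_neg _ (map_neg φ)]

theorem map_dSum {n m : ℕ} (x : Matrix (Fin n) (Fin n) E) (y : Matrix (Fin m) (Fin m) E)
    (φ : Module.Dual ℝ E) : (dSum x y).map φ = dSum (x.map φ) (y.map φ) := by
  simp only [dSum, Matrix.reindex_apply, ← Matrix.submatrix_map, Matrix.fromBlocks_map,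
    Matrix.map_zero _ (map_zero φ)]

theorem matrix_ext_of_dual {m k : ℕ} {x y : Matrix (Fin m) (Fin k) E}
    (h : ∀ φ : Module.Dual ℝ E, x.map φ = y.map φ) : x = y := by
  ext i j
  rw [← sub_eq_zero, ← Module.forall_dual_apply_eq_zero_iff ℝ]
  intro φ
  simpa [sub_eq_zero] using congrFun₂ (h φ) i j

theorem rComm_iff_forall_dual {n : ℕ} (p : Matrix (Fin n) (Fin n) ℝ)
    (x : Matrix (Fin n) (Fin n) E) : RComm p x ↔ ∀ φ : Module.Dual ℝ E, Commute p (x.map φ) := by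
  refine ⟨fun h φ => ?_, fun h => matrix_ext_of_dual fun φ => ?_⟩
  · have h' := congrArg (·.map φ) h
    simp only [map_lmul, map_rmulE] at h'
    exact h'
  · simpa [map_lmul, map_rmulE] using (h φ).eq

/-- `c(a + ib)` for rectangular real matrices `a, b`. -/
def cMatR {m k : ℕ} (a b : Matrix (Fin m) (Fin k) ℝ) : Matrix (Fin (m + m)) (Fin (k + k)) ℝ :=
  Matrix.reindex finSumFinEquiv finSumFinEquiv (Matrix.fromBlocks a (-b) b a)

theorem cMat_eq_cMatR {n : ℕ} (x y : Matrix (Fin n) (Fin n) ℝ) : cMat x y = cMatR x y := rfl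

theorem cMatR_mul {m k l : ℕ} (a b : Matrix (Fin m) (Fin k) ℝ) (c d : Matrix (Fin k) (Fin l) ℝ) :
    cMatR a b * cMatR c d = cMatR (a * c - b * d) (a * d + b * c) := by
  simp only [cMatR, Matrix.reindex_apply, Matrix.submatrix_mul_equiv, Matrix.fromBlocks_multiply,
    Matrix.neg_mul, Matrix.mul_neg]
  congr 2 <;> abel

theorem cMatR_transpose {m k : ℕ} (a b : Matrix (Fin m) (Fin k) ℝ) :
    (cMatR a b)ᵀ = cMatR aᵀ (-bᵀ) := by
  simp [cMatR, Matrix.fromBlocks_transpose]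

theorem cMatR_one_zero (n : ℕ) : cMatR (1 : Matrix (Fin n) (Fin n) ℝ) 0 = 1 := by
  simp [cMatR, Matrix.fromBlocks_one]

theorem cMatR_inj {m k : ℕ} {a b c d : Matrix (Fin m) (Fin k) ℝ} :
    cMatR a b = cMatR c d ↔ a = c ∧ b = d := by
  simp only [cMatR, EmbeddingLike.apply_eq_iff_eq, Matrix.fromBlocks_inj, neg_inj]
  tauto

theorem isIsometry_cMatR {m k : ℕ} {a b : Matrix (Fin m) (Fin k) ℝ} (hab : IsCIsometry a b) :
    IsIsometry (cMatR a b) := by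
  obtain ⟨hre, him⟩ := hab
  rw [IsIsometry, cMatR_transpose, cMatR_mul, ← cMatR_one_zero]
  congr 1
  · rwa [Matrix.neg_mul, sub_neg_eq_add]
  · rwa [Matrix.neg_mul, ← sub_eq_add_neg]

theorem cMatR_mul_transpose {m k : ℕ} (a b : Matrix (Fin m) (Fin k) ℝ) :
    cMatR a b * (cMatR a b)ᵀ = cMatR (a * aᵀ + b * bᵀ) (b * aᵀ - a * bᵀ) := by
  rw [cMatR_transpose, cMatR_mul]
  congr 1
  · rw [Matrix.mul_neg, sub_neg_eq_add]
  · rw [Matrix.mul_neg, neg_add_eq_sub]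

theorem isIsometry_mul {m k l : ℕ} {α : Matrix (Fin m) (Fin k) ℝ} {β : Matrix (Fin k) (Fin l) ℝ}
    (hα : IsIsometry α) (hβ : IsIsometry β) : IsIsometry (α * β) := by
  rw [IsIsometry, Matrix.transpose_mul, Matrix.mul_assoc, ← Matrix.mul_assoc αᵀ, hα,
    Matrix.one_mul, hβ]

def inlMat (n m : ℕ) : Matrix (Fin (n + m)) (Fin n) ℝ :=
  Matrix.reindex finSumFinEquiv (Equiv.refl _) (Matrix.fromRows 1 0)

def inrMat (n m : ℕ) : Matrix (Fin (n + m)) (Fin m) ℝ :=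
  Matrix.reindex finSumFinEquiv (Equiv.refl _) (Matrix.fromRows 0 1)

theorem isIsometry_inlMat (n m : ℕ) : IsIsometry (inlMat n m) := by
  simp [IsIsometry, inlMat, Matrix.transpose_fromRows, Matrix.fromCols_mul_fromRows]

theorem isIsometry_inrMat (n m : ℕ) : IsIsometry (inrMat n m) := by
  simp [IsIsometry, inrMat, Matrix.transpose_fromRows, Matrix.fromCols_mul_fromRows]

theorem inlMat_mul_transpose_add_inrMat_mul_transpose (n m : ℕ) :
    inlMat n m * (inlMat n m)ᵀ + inrMat n m * (inrMat n m)ᵀ = 1 := by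
  simp only [inlMat, inrMat, Matrix.reindex_apply, Equiv.refl_symm, Equiv.coe_refl,
    Matrix.transpose_submatrix, Matrix.transpose_fromRows]
  rw [← Matrix.submatrix_mul _ _ _ _ _ Function.bijective_id,
    ← Matrix.submatrix_mul _ _ _ _ _ Function.bijective_id, Matrix.fromRows_mul_fromCols,
    Matrix.fromRows_mul_fromCols, ← Pi.add_apply, ← Pi.add_apply, ← Matrix.submatrix_add,
    Matrix.fromBlocks_add]
  simp [Matrix.fromBlocks_one]

theorem inlMat_transpose_mul_dSum {n m : ℕ} (x : Matrix (Fin n) (Fin n) ℝ)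
    (y : Matrix (Fin m) (Fin m) ℝ) : (inlMat n m)ᵀ * dSum x y * inlMat n m = x := by
  simp [inlMat, dSum, Matrix.transpose_fromRows, Matrix.fromCols_mul_fromBlocks,
    Matrix.fromCols_mul_fromRows]

theorem inrMat_transpose_mul_dSum {n m : ℕ} (x : Matrix (Fin n) (Fin n) ℝ)
    (y : Matrix (Fin m) (Fin m) ℝ) : (inrMat n m)ᵀ * dSum x y * inrMat n m = y := by
  simp [inrMat, dSum, Matrix.transpose_fromRows, Matrix.fromCols_mul_fromBlocks,
    Matrix.fromCols_mul_fromRows]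

theorem compress_mul {N p q : ℕ} (α : Matrix (Fin N) (Fin p) ℝ) (β : Matrix (Fin p) (Fin q) ℝ)
    (y : Matrix (Fin N) (Fin N) E) : compress (α * β) y = compress β (compress α y) :=
  matrix_ext_of_dual fun φ => by
    simp only [map_compress, Matrix.transpose_mul, Matrix.mul_assoc]

theorem RComm.add {N : ℕ} {p q : Matrix (Fin N) (Fin N) ℝ} {y : Matrix (Fin N) (Fin N) E}
    (hp : RComm p y) (hq : RComm q y) : RComm (p + q) y := by
  rw [rComm_iff_forall_dual] at *
  exact fun φ => (hp φ).add_left (hq φ)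

theorem compress_inlMat_dSum {n m : ℕ} (x : Matrix (Fin n) (Fin n) E)
    (y : Matrix (Fin m) (Fin m) E) : compress (inlMat n m) (dSum x y) = x :=
  matrix_ext_of_dual fun φ => by rw [map_compress, map_dSum, inlMat_transpose_mul_dSum]

theorem compress_inrMat_dSum {n m : ℕ} (x : Matrix (Fin n) (Fin n) E)
    (y : Matrix (Fin m) (Fin m) E) : compress (inrMat n m) (dSum x y) = y :=
  matrix_ext_of_dual fun φ => by rw [map_compress, map_dSum, inrMat_transpose_mul_dSum]

/-- A dilation of `x ⊕ y` restricts, through the two summand inclusions, to dilations of `x` and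
of `y`, and the two projections these leave invariant add up to that of the original one. -/
theorem IsMaxIn.dSum {K : NCConvexSet E} {n m : ℕ} {x : Matrix (Fin n) (Fin n) E}
    {y : Matrix (Fin m) (Fin m) E} (hx : IsMaxIn K x) (hy : IsMaxIn K y) :
    IsMaxIn K (dSum x y) := by
  intro k z γ hz hγ hdil
  have hl := hx z (γ * inlMat n m) hz (isIsometry_mul hγ (isIsometry_inlMat n m))
    (by rw [compress_mul, hdil, compress_inlMat_dSum])
  have hr := hy z (γ * inrMat n m) hz (isIsometry_mul hγ (isIsometry_inrMat n m))
    (by rw [compress_mul, hdil, compress_inrMat_dSum])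
  have hsplit : γ * γᵀ =
      γ * inlMat n m * (γ * inlMat n m)ᵀ + γ * inrMat n m * (γ * inrMat n m)ᵀ := by
    simp only [Matrix.transpose_mul, Matrix.mul_assoc, ← Matrix.mul_add]
    rw [← Matrix.mul_assoc (inlMat n m), ← Matrix.mul_assoc (inrMat n m), ← Matrix.add_mul,
      inlMat_mul_transpose_add_inrMat_mul_transpose, Matrix.one_mul]
  rw [hsplit]
  exact hl.add hr

theorem cMat_zero_right {n : ℕ} (x : Matrix (Fin n) (Fin n) E) : cMat x 0 = dSum x x := by
  rw [cMat, dSum, neg_zero]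

theorem compress_cMatR_cMat {m k : ℕ} (a b : Matrix (Fin m) (Fin k) ℝ)
    (z w : Matrix (Fin m) (Fin m) E) :
    compress (cMatR a b) (cMat z w) = cMat (compressC a b z w).1 (compressC a b z w).2 :=
  matrix_ext_of_dual fun φ => by
    simp only [map_compress, map_cMat, cMat_eq_cMatR, cMatR_transpose, cMatR_mul, compressC,
      Matrix.map_add _ (map_add φ), Matrix.map_sub _ (map_sub φ), map_lmul, map_rmulE]
    congr 1 <;>
      simp only [Matrix.mul_add, Matrix.add_mul, Matrix.mul_sub, Matrix.sub_mul, Matrix.neg_mul,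
        Matrix.mul_assoc] <;>
      abel

theorem CCommC.of_rComm_cMatR {m : ℕ} {p q : Matrix (Fin m) (Fin m) ℝ}
    {z w : Matrix (Fin m) (Fin m) E} (h : RComm (cMatR p q) (cMat z w)) : CCommC p q z w := by
  rw [rComm_iff_forall_dual] at h
  have hφ φ := cMatR_inj.mp <| by
    simpa only [map_cMat, cMat_eq_cMatR, cMatR_mul] using (h φ).eq
  constructor <;> refine matrix_ext_of_dual fun φ => ?_ <;>
    simp only [Matrix.map_add _ (map_add φ), Matrix.map_sub _ (map_sub φ), map_lmul, map_rmulE]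
  · exact (hφ φ).1
  · rw [(hφ φ).2, add_comm]

theorem compressC_zero {N m : ℕ} (α : Matrix (Fin N) (Fin m) ℝ) (y : Matrix (Fin N) (Fin N) E) :
    compressC α 0 y 0 = (compress α y, 0) := by
  refine Prod.ext ?_ ?_ <;> ext i j <;> simp [compressC, compress, lmul, rmulE]

theorem cCommC_zero_iff {N : ℕ} (p : Matrix (Fin N) (Fin N) ℝ) (y : Matrix (Fin N) (Fin N) E) :
    CCommC p 0 y 0 ↔ RComm p y := by
  simp [CCommC, RComm, lmul, rmulE]

theorem isCMaxInC_zero_of_isMaxIn {K : NCConvexSet E} {n : ℕ} {x : Matrix (Fin n) (Fin n) E}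
    (hx : IsMaxIn K x) : IsCMaxInC K x 0 := by
  intro m z w a b hzw hab hdil
  have hγ : compress (cMatR a b) (cMat z w) = dSum x x := by
    simp only [compress_cMatR_cMat, hdil, cMat_zero_right]
  have h := hx.dSum hx (cMat z w) (cMatR a b) hzw (isIsometry_cMatR hab) hγ
  rw [cMatR_mul_transpose] at h
  exact .of_rComm_cMatR h

theorem isMaxIn_of_isCMaxInC_zero {K : NCConvexSet E} {n : ℕ} {x : Matrix (Fin n) (Fin n) E}
    (hx : IsCMaxInC K x 0) : IsMaxIn K x := by
  intro m y α hy hα hdil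
  have hmem : cMat y 0 ∈ K.level (m + m) := cMat_zero_right y ▸ K.dSum_mem hy hy
  have hαc : IsCIsometry α 0 :=
    ⟨by rwa [Matrix.transpose_zero, Matrix.zero_mul, add_zero], by simp⟩
  have h := hx y 0 α 0 hmem hαc (by rw [compressC_zero, hdil])
  simpa [cCommC_zero_iff] using h

theorem maximal_iff_complex_maximal_general
    (E : Type) [AddCommGroup E] [Module ℝ E]
    (K : NCConvexSet E) {n : ℕ}
    (x : Matrix (Fin n) (Fin n) E) :
    IsMaxIn K x ↔ IsCMaxInC K x 0 :=
  ⟨isCMaxInC_zero_of_isMaxIn, isMaxIn_of_isCMaxInC_zero⟩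

/-- For `K` a real compact nc convex set and `x ∈ K`, the point `x`
is maximal in `K` if and only if `x + i0` is maximal in the complexification `K_c`. -/
theorem maximal_iff_complex_maximal
    (E : Type) [AddCommGroup E] [Module ℝ E] [TopologicalSpace E]
    (K : NCConvexSet E) (hK : K.IsCompactSet) {n : ℕ}
    (x : Matrix (Fin n) (Fin n) E) (hx : x ∈ K.level n) :
    IsMaxIn K x ↔ IsCMaxInC K x 0 :=
  maximal_iff_complex_maximal_general E K x

end NCC
end
end

section
/- For K a real nc convex set, a point x ∈ K is extreme if and only if it is both pure and maximal. -/
open Matrix Filter Topology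
open scoped RealInnerProductSpace ComplexOrder

noncomputable section

/-! Maximality of `x` is precisely the commutation clause of extremality for one-term nc convex
combinations `x = αᵀ y α` with `α` an isometry; conversely, the isometry `βᵢ` that purity
attaches to a summand of an arbitrary combination exhibits `xᵢ` as a dilation of `x`, so
maximality supplies the missing commutation. -/

namespace NCC

section

variable {E : Type*} [AddCommMonoid E] [Module ℝ E]

lemma lmul_smul {m n p : ℕ} (c : ℝ) (a : Matrix (Fin m) (Fin n) ℝ)
    (x : Matrix (Fin n) (Fin p) E) : lmul (c • a) x = c • lmul a x := by
  ext i j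
  simp [lmul, Finset.smul_sum, smul_smul]

lemma rmulE_smul {m n p : ℕ} (c : ℝ) (x : Matrix (Fin m) (Fin n) E)
    (a : Matrix (Fin n) (Fin p) ℝ) : rmulE x (c • a) = c • rmulE x a := by
  ext i j
  simp [rmulE, Finset.smul_sum, smul_smul]

lemma RComm.smul {n : ℕ} {p : Matrix (Fin n) (Fin n) ℝ} {x : Matrix (Fin n) (Fin n) E}
    (c : ℝ) (h : RComm p x) : RComm (c • p) x := by
  rw [RComm, lmul_smul, rmulE_smul, h]

lemma RComm.zero {n : ℕ} (x : Matrix (Fin n) (Fin n) E) : RComm 0 x := by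
  ext i j
  simp [lmul, rmulE]

variable {K : NCConvexSet E} {n : ℕ} {x : Matrix (Fin n) (Fin n) E}

lemma IsExtremeIn.isPureIn (h : IsExtremeIn K x) : IsPureIn K x := by
  intro N d xs αs hmem hne hsum hcomb i
  obtain ⟨c, β, hc, hβ, hαβ, hcβ, -⟩ := h N d xs αs hmem hne hsum hcomb i
  exact ⟨c, β, hc, hβ, hαβ, hcβ⟩

lemma IsExtremeIn.isMaxIn (h : IsExtremeIn K x) : IsMaxIn K x := by
  intro m y α hy hα hcomp
  by_cases hα0 : α = 0
  · simpa [hα0] using RComm.zero y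
  obtain ⟨c, β, -, -, rfl, -, hcomm⟩ :=
    h 1 (fun _ => m) (fun _ => y) (fun _ => α) (fun _ => hy) (fun _ => hα0)
      (by simpa [IsIsometry] using hα) (by simpa using hcomp) 0
  have hscale : (c • β) * (c • β).transpose = (c * c) • (β * β.transpose) := by
    rw [transpose_smul, Matrix.smul_mul, Matrix.mul_smul, smul_smul]
  rw [hscale]
  exact hcomm.smul _

lemma IsPureIn.isExtremeIn (hp : IsPureIn K x) (hm : IsMaxIn K x) : IsExtremeIn K x := by
  intro N d xs αs hmem hne hsum hcomb i
  obtain ⟨c, β, hc, hβ, hαβ, hcβ⟩ := hp N d xs αs hmem hne hsum hcomb i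
  exact ⟨c, β, hc, hβ, hαβ, hcβ, hm (xs i) β (hmem i) hβ hcβ⟩

end

theorem extreme_iff_pure_and_maximal_general
    (E : Type) [AddCommGroup E] [Module ℝ E]
    (K : NCConvexSet E) {n : ℕ}
    (x : Matrix (Fin n) (Fin n) E) :
    IsExtremeIn K x ↔ IsPureIn K x ∧ IsMaxIn K x :=
  ⟨fun h => ⟨h.isPureIn, h.isMaxIn⟩, fun ⟨hp, hm⟩ => hp.isExtremeIn hm⟩

/-- For `K` a real nc convex set, a point `x ∈ K` is extreme
if and only if it is both pure and maximal. -/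
theorem extreme_iff_pure_and_maximal
    (E : Type) [AddCommGroup E] [Module ℝ E]
    (K : NCConvexSet E) {n : ℕ}
    (x : Matrix (Fin n) (Fin n) E) (hx : x ∈ K.level n) :
    IsExtremeIn K x ↔ IsPureIn K x ∧ IsMaxIn K x :=
  extreme_iff_pure_and_maximal_general E K x

end NCC
end
end

section
/- For K a real compact nc convex set, if x ∈ K_n is extreme in K, then x is extreme in the complexification K_c if and only if x is complex-irreducible, i.e. every nonzero positive matrix in M_n(ℂ) commuting with x is a positive scalar multiple of 1_n. In particular, a point x ∈ K_1 is nc extreme in K if and only if x + i0 is nc extreme in K_c. -/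
open Matrix Filter Topology
open scoped RealInnerProductSpace ComplexOrder

noncomputable section

/-!
If `x + i0` is extreme in `K_c` and a positive `T` commuting with `x` is not scalar, a spectral
projection `P` of `T` is a polynomial in `T`, so it commutes with `x`, and
`x = P* x P + (1 - P)* x (1 - P)` is a complex nc convex combination. Extremality makes `P* P = P`
scalar, forcing `P ∈ {0, 1}`, a contradiction.

Conversely, `c(·)` turns a complex nc convex combination with coefficients `aᵢ + ibᵢ` into a
real one with coefficients `[aᵢ; bᵢ]`. Extremality in `K` gives isometries `βᵢ = [aᵢ; bᵢ] / cᵢ` with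
`βᵢβᵢᵀ` commuting with `c(xᵢ, yᵢ)`. Since the complex structure `J` also commutes with
`c(xᵢ, yᵢ)`, its compression `βᵢᵀ J βᵢ`, which is `aᵢᵀbᵢ - bᵢᵀaᵢ` up to `cᵢ⁻²`, is an antisymmetric
real matrix commuting with `x`; complex irreducibility makes it vanish, so `(aᵢ + ibᵢ) / cᵢ` is a
complex isometry.

At level one every point is complex-irreducible, and a real nc convex combination is a complex one
with `bᵢ = 0`.
-/

namespace NCC

section MatrixAction

variable {E : Type*} [AddCommGroup E] [Module ℝ E] {m n p q : ℕ}

theorem lmul_apply (a : Matrix (Fin m) (Fin n) ℝ) (x : Matrix (Fin n) (Fin p) E)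
    (i : Fin m) (j : Fin p) : lmul a x i j = ∑ k, a i k • x k j := rfl

theorem rmulE_apply (x : Matrix (Fin m) (Fin n) E) (a : Matrix (Fin n) (Fin p) ℝ)
    (i : Fin m) (j : Fin p) : rmulE x a i j = ∑ k, a k j • x i k := rfl

theorem lmul_mul (a : Matrix (Fin m) (Fin n) ℝ) (b : Matrix (Fin n) (Fin p) ℝ)
    (x : Matrix (Fin p) (Fin q) E) : lmul (a * b) x = lmul a (lmul b x) := by
  ext i j
  simp only [lmul_apply, Matrix.mul_apply, Finset.sum_smul, Finset.smul_sum, mul_smul]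
  exact Finset.sum_comm

theorem rmulE_mul (x : Matrix (Fin m) (Fin n) E) (a : Matrix (Fin n) (Fin p) ℝ)
    (b : Matrix (Fin p) (Fin q) ℝ) : rmulE x (a * b) = rmulE (rmulE x a) b := by
  ext i j
  simp only [rmulE_apply, Matrix.mul_apply, Finset.sum_smul, Finset.smul_sum, mul_smul]
  rw [Finset.sum_comm]
  simp_rw [smul_comm (b _ j)]

theorem lmul_rmulE (a : Matrix (Fin m) (Fin n) ℝ) (x : Matrix (Fin n) (Fin p) E)
    (b : Matrix (Fin p) (Fin q) ℝ) : lmul a (rmulE x b) = rmulE (lmul a x) b := by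
  ext i j
  simp only [lmul_apply, rmulE_apply, Finset.smul_sum]
  rw [Finset.sum_comm]
  simp_rw [smul_comm (a i _)]

@[simp] theorem lmul_one (x : Matrix (Fin n) (Fin p) E) : lmul 1 x = x := by
  ext i j; simp [lmul_apply, Matrix.one_apply, ite_smul]

@[simp] theorem rmulE_one (x : Matrix (Fin m) (Fin n) E) : rmulE x 1 = x := by
  ext i j; simp [rmulE_apply, Matrix.one_apply, ite_smul]

@[simp] theorem lmul_zero_left (x : Matrix (Fin n) (Fin p) E) :
    lmul (0 : Matrix (Fin m) (Fin n) ℝ) x = 0 := by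
  ext i j; simp [lmul_apply]

@[simp] theorem rmulE_zero_left (a : Matrix (Fin n) (Fin p) ℝ) :
    rmulE (0 : Matrix (Fin m) (Fin n) E) a = 0 := by
  ext i j; simp [rmulE_apply]

@[simp] theorem lmul_zero_right (a : Matrix (Fin m) (Fin n) ℝ) :
    lmul a (0 : Matrix (Fin n) (Fin p) E) = 0 := by
  ext i j; simp [lmul_apply]

@[simp] theorem rmulE_zero_right (x : Matrix (Fin m) (Fin n) E) :
    rmulE x (0 : Matrix (Fin n) (Fin p) ℝ) = 0 := by
  ext i j; simp [rmulE_apply]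

theorem lmul_add_left (a b : Matrix (Fin m) (Fin n) ℝ)
    (x : Matrix (Fin n) (Fin p) E) : lmul (a + b) x = lmul a x + lmul b x := by
  ext i j; simp [lmul_apply, add_smul, Finset.sum_add_distrib]

theorem rmulE_add_right (x : Matrix (Fin m) (Fin n) E)
    (a b : Matrix (Fin n) (Fin p) ℝ) : rmulE x (a + b) = rmulE x a + rmulE x b := by
  ext i j; simp [rmulE_apply, add_smul, Finset.sum_add_distrib]

@[simp] theorem lmul_neg_right (a : Matrix (Fin m) (Fin n) ℝ)
    (x : Matrix (Fin n) (Fin p) E) : lmul a (-x) = -lmul a x := by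
  ext i j; simp [lmul_apply]

@[simp] theorem rmulE_neg_left (x : Matrix (Fin m) (Fin n) E)
    (a : Matrix (Fin n) (Fin p) ℝ) : rmulE (-x) a = -rmulE x a := by
  ext i j; simp [rmulE_apply]

@[simp] theorem lmul_neg_left (a : Matrix (Fin m) (Fin n) ℝ)
    (x : Matrix (Fin n) (Fin p) E) : lmul (-a) x = -lmul a x := by
  ext i j; simp [lmul_apply]

@[simp] theorem rmulE_neg_right (x : Matrix (Fin m) (Fin n) E)
    (a : Matrix (Fin n) (Fin p) ℝ) : rmulE x (-a) = -rmulE x a := by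
  ext i j; simp [rmulE_apply]

theorem lmul_sub_left (a b : Matrix (Fin m) (Fin n) ℝ)
    (x : Matrix (Fin n) (Fin p) E) : lmul (a - b) x = lmul a x - lmul b x := by
  rw [sub_eq_add_neg, lmul_add_left, lmul_neg_left, sub_eq_add_neg]

theorem rmulE_sub_right (x : Matrix (Fin m) (Fin n) E)
    (a b : Matrix (Fin n) (Fin p) ℝ) : rmulE x (a - b) = rmulE x a - rmulE x b := by
  rw [sub_eq_add_neg, rmulE_add_right, rmulE_neg_right, sub_eq_add_neg]

theorem lmul_smul_left (c : ℝ) (a : Matrix (Fin m) (Fin n) ℝ)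
    (x : Matrix (Fin n) (Fin p) E) : lmul (c • a) x = c • lmul a x := by
  ext i j; simp [lmul_apply, Finset.smul_sum, mul_smul]

theorem rmulE_smul_right (c : ℝ) (x : Matrix (Fin m) (Fin n) E)
    (a : Matrix (Fin n) (Fin p) ℝ) : rmulE x (c • a) = c • rmulE x a := by
  ext i j; simp [rmulE_apply, Finset.smul_sum, mul_smul]

theorem sum_lmul {N : ℕ} (a : Fin N → Matrix (Fin m) (Fin n) ℝ) (x : Matrix (Fin n) (Fin p) E) :
    lmul (∑ j, a j) x = ∑ j, lmul (a j) x := by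
  ext i k
  simp only [Matrix.sum_apply, lmul_apply, Finset.sum_smul]
  exact Finset.sum_comm

def rCommutant (x : Matrix (Fin n) (Fin n) E) :
    Subalgebra ℝ (Matrix (Fin n) (Fin n) ℝ) where
  carrier := {p | RComm p x}
  mul_mem' {p q} (hp : lmul p x = rmulE x p) (hq : lmul q x = rmulE x q) := by
    change lmul (p * q) x = rmulE x (p * q)
    rw [lmul_mul, hq, lmul_rmulE, hp, ← rmulE_mul]
  add_mem' {p q} (hp : lmul p x = rmulE x p) (hq : lmul q x = rmulE x q) := by
    change lmul (p + q) x = rmulE x (p + q)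
    rw [lmul_add_left, rmulE_add_right, hp, hq]
  algebraMap_mem' c := by
    change lmul _ x = rmulE x _
    rw [Algebra.algebraMap_eq_smul_one, lmul_smul_left, rmulE_smul_right, lmul_one, rmulE_one]

theorem compress_lmul_of_rComm {β : Matrix (Fin m) (Fin n) ℝ} (hβ : IsIsometry β)
    {M : Matrix (Fin m) (Fin m) E} (hM : RComm (β * βᵀ) M) (J : Matrix (Fin m) (Fin m) ℝ) :
    compress β (lmul J M) = lmul (βᵀ * J * β) (compress β M) := by
  have hβ' : β * βᵀ * β = β := by rw [Matrix.mul_assoc, hβ, Matrix.mul_one]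
  calc compress β (lmul J M) = rmulE (lmul (βᵀ * J) M) (β * βᵀ * β) := by
        rw [hβ', compress, lmul_mul, lmul_rmulE]
    _ = rmulE (lmul (βᵀ * J) (lmul (β * βᵀ) M)) β := by
        rw [hM, lmul_rmulE, ← rmulE_mul]
    _ = lmul (βᵀ * J * β) (compress β M) := by
        simp only [compress, lmul_rmulE, ← lmul_mul, Matrix.mul_assoc]

theorem compress_rmulE_of_rComm {β : Matrix (Fin m) (Fin n) ℝ} (hβ : IsIsometry β)
    {M : Matrix (Fin m) (Fin m) E} (hM : RComm (β * βᵀ) M) (J : Matrix (Fin m) (Fin m) ℝ) :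
    compress β (rmulE M J) = rmulE (compress β M) (βᵀ * J * β) := by
  have hβ' : βᵀ * β * βᵀ = βᵀ := by rw [hβ, Matrix.one_mul]
  calc compress β (rmulE M J) = lmul (βᵀ * β * βᵀ) (rmulE M (J * β)) := by
        rw [hβ', compress, rmulE_mul]
    _ = lmul βᵀ (rmulE (rmulE M (β * βᵀ)) (J * β)) := by
        rw [← hM]
        simp only [lmul_rmulE, ← lmul_mul, Matrix.mul_assoc]
    _ = rmulE (compress β M) (βᵀ * J * β) := by
        simp only [compress, lmul_rmulE, ← rmulE_mul, Matrix.mul_assoc]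

theorem RComm.compress {β : Matrix (Fin m) (Fin n) ℝ} (hβ : IsIsometry β)
    {M : Matrix (Fin m) (Fin m) E} (hM : RComm (β * βᵀ) M) {J : Matrix (Fin m) (Fin m) ℝ}
    (hJ : RComm J M) : RComm (βᵀ * J * β) (compress β M) := by
  rw [RComm, ← compress_lmul_of_rComm hβ hM, hJ, compress_rmulE_of_rComm hβ hM]

end MatrixAction

section Blocks

variable {R : Type*} {d e m : ℕ}

def stack (a b : Matrix (Fin d) (Fin m) R) : Matrix (Fin (d + d)) (Fin m) R :=
  Matrix.of fun p j => Sum.elim (fun i => a i j) (fun i => b i j) (finSumFinEquiv.symm p)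

def blocks (A B C D : Matrix (Fin d) (Fin e) R) : Matrix (Fin (d + d)) (Fin (e + e)) R :=
  Matrix.reindex finSumFinEquiv finSumFinEquiv (Matrix.fromBlocks A B C D)

@[simp] theorem stack_inL (a b : Matrix (Fin d) (Fin m) R) (i : Fin d) (j : Fin m) :
    stack a b (inL i) j = a i j := by
  simp only [stack, inL, Matrix.of_apply, Equiv.symm_apply_apply, Sum.elim_inl]

@[simp] theorem stack_inR (a b : Matrix (Fin d) (Fin m) R) (i : Fin d) (j : Fin m) :
    stack a b (inR i) j = b i j := by
  simp only [stack, inR, Matrix.of_apply, Equiv.symm_apply_apply, Sum.elim_inr]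

@[simp] theorem blocks_inL_inL (A B C D : Matrix (Fin d) (Fin e) R) (i : Fin d) (j : Fin e) :
    blocks A B C D (inL i) (inL j) = A i j := by
  simp only [blocks, inL, Matrix.reindex_apply, Matrix.submatrix_apply,
    Equiv.symm_apply_apply, Matrix.fromBlocks_apply₁₁]

@[simp] theorem blocks_inL_inR (A B C D : Matrix (Fin d) (Fin e) R) (i : Fin d) (j : Fin e) :
    blocks A B C D (inL i) (inR j) = B i j := by
  simp only [blocks, inL, inR, Matrix.reindex_apply, Matrix.submatrix_apply,
    Equiv.symm_apply_apply, Matrix.fromBlocks_apply₁₂]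

@[simp] theorem blocks_inR_inL (A B C D : Matrix (Fin d) (Fin e) R) (i : Fin d) (j : Fin e) :
    blocks A B C D (inR i) (inL j) = C i j := by
  simp only [blocks, inL, inR, Matrix.reindex_apply, Matrix.submatrix_apply,
    Equiv.symm_apply_apply, Matrix.fromBlocks_apply₂₁]

@[simp] theorem blocks_inR_inR (A B C D : Matrix (Fin d) (Fin e) R) (i : Fin d) (j : Fin e) :
    blocks A B C D (inR i) (inR j) = D i j := by
  simp only [blocks, inR, Matrix.reindex_apply, Matrix.submatrix_apply,
    Equiv.symm_apply_apply, Matrix.fromBlocks_apply₂₂]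

theorem sum_fin_add_self {M : Type*} [AddCommMonoid M] (f : Fin (d + d) → M) :
    ∑ p, f p = ∑ i, f (inL i) + ∑ i, f (inR i) :=
  Fin.sum_univ_add f

theorem fin_add_self_cases {P : Fin (d + d) → Prop} (hL : ∀ i, P (inL i))
    (hR : ∀ i, P (inR i)) (p : Fin (d + d)) : P p := by
  obtain ⟨s | s, rfl⟩ := finSumFinEquiv.surjective p
  exacts [hL s, hR s]

theorem blocks_ext {M N : Matrix (Fin (d + d)) (Fin (e + e)) R}
    (hLL : ∀ i j, M (inL i) (inL j) = N (inL i) (inL j))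
    (hLR : ∀ i j, M (inL i) (inR j) = N (inL i) (inR j))
    (hRL : ∀ i j, M (inR i) (inL j) = N (inR i) (inL j))
    (hRR : ∀ i j, M (inR i) (inR j) = N (inR i) (inR j)) : M = N := by
  ext p q
  induction p using fin_add_self_cases <;> induction q using fin_add_self_cases <;> simp_all

theorem stack_ext {M N : Matrix (Fin (d + d)) (Fin m) R}
    (hL : ∀ i j, M (inL i) j = N (inL i) j) (hR : ∀ i j, M (inR i) j = N (inR i) j) :
    M = N := by
  ext p j
  induction p using fin_add_self_cases <;> simp_all

theorem blocks_inj {A B C D A' B' C' D' : Matrix (Fin d) (Fin e) R}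
    (h : blocks A B C D = blocks A' B' C' D') : A = A' ∧ B = B' ∧ C = C' ∧ D = D' := by
  refine ⟨?_, ?_, ?_, ?_⟩ <;> ext i j
  · simpa using congr_fun₂ h (inL i) (inL j)
  · simpa using congr_fun₂ h (inL i) (inR j)
  · simpa using congr_fun₂ h (inR i) (inL j)
  · simpa using congr_fun₂ h (inR i) (inR j)

theorem stack_eq_zero_iff [Zero R] {a b : Matrix (Fin d) (Fin m) R} :
    stack a b = 0 ↔ a = 0 ∧ b = 0 := by
  refine ⟨fun h => ⟨?_, ?_⟩, fun ⟨ha, hb⟩ => stack_ext (by simp [ha]) (by simp [hb])⟩ <;>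
    ext i j
  · simpa using congr_fun₂ h (inL i) j
  · simpa using congr_fun₂ h (inR i) j

theorem stack_smul (c : ℝ) (a b : Matrix (Fin d) (Fin m) ℝ) :
    stack (c • a) (c • b) = c • stack a b :=
  stack_ext (by simp) (by simp)

theorem transpose_stack_mul_stack {m' : ℕ} (a b : Matrix (Fin d) (Fin m) ℝ)
    (a' b' : Matrix (Fin d) (Fin m') ℝ) :
    (stack a b)ᵀ * stack a' b' = aᵀ * a' + bᵀ * b' := by
  ext i j
  simp [Matrix.mul_apply, sum_fin_add_self]

theorem stack_mul_transpose_stack {d' : ℕ} (a b : Matrix (Fin d) (Fin m) ℝ)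
    (a' b' : Matrix (Fin d') (Fin m) ℝ) :
    stack a b * (stack a' b')ᵀ = blocks (a * a'ᵀ) (a * b'ᵀ) (b * a'ᵀ) (b * b'ᵀ) := by
  apply blocks_ext <;> intro i j <;> simp [Matrix.mul_apply]

theorem blocks_mul_stack (P Q R S : Matrix (Fin d) (Fin e) ℝ) (a b : Matrix (Fin e) (Fin m) ℝ) :
    blocks P Q R S * stack a b = stack (P * a + Q * b) (R * a + S * b) := by
  apply stack_ext <;> intro i j <;> simp [Matrix.mul_apply, sum_fin_add_self]

variable {E : Type*} [AddCommGroup E] [Module ℝ E]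

theorem rmulE_blocks_stack (X Y Z W : Matrix (Fin d) (Fin e) E) (a b : Matrix (Fin e) (Fin m) ℝ) :
    rmulE (blocks X Y Z W) (stack a b) = stack (rmulE X a + rmulE Y b) (rmulE Z a + rmulE W b) := by
  apply stack_ext <;> intro i j <;> simp [rmulE_apply, sum_fin_add_self]

theorem lmul_transpose_stack_stack {p : ℕ} (a b : Matrix (Fin d) (Fin m) ℝ)
    (X Y : Matrix (Fin d) (Fin p) E) : lmul (stack a b)ᵀ (stack X Y) = lmul aᵀ X + lmul bᵀ Y := by
  ext i j
  simp [lmul_apply, sum_fin_add_self]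

theorem lmul_blocks_blocks {f : ℕ} (P Q R S : Matrix (Fin d) (Fin e) ℝ)
    (X Y Z W : Matrix (Fin e) (Fin f) E) :
    lmul (blocks P Q R S) (blocks X Y Z W) =
      blocks (lmul P X + lmul Q Z) (lmul P Y + lmul Q W) (lmul R X + lmul S Z)
        (lmul R Y + lmul S W) := by
  apply blocks_ext <;> intro i j <;> simp [lmul_apply, sum_fin_add_self]

theorem rmulE_blocks_blocks {f : ℕ} (X Y Z W : Matrix (Fin d) (Fin e) E)
    (P Q R S : Matrix (Fin e) (Fin f) ℝ) :
    rmulE (blocks X Y Z W) (blocks P Q R S) =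
      blocks (rmulE X P + rmulE Y R) (rmulE X Q + rmulE Y S) (rmulE Z P + rmulE W R)
        (rmulE Z Q + rmulE W S) := by
  apply blocks_ext <;> intro i j <;> simp [rmulE_apply, sum_fin_add_self]

end Blocks

section Complexification

variable {E : Type*} [AddCommGroup E] [Module ℝ E] {d n : ℕ}

theorem cMat_eq_blocks (x y : Matrix (Fin n) (Fin n) E) :
    cMat x y = blocks x (-y) y x := rfl

theorem cMat_zero_mem {K : NCConvexSet E} {z : Matrix (Fin n) (Fin n) E}
    (hz : z ∈ K.level n) : cMat z 0 ∈ K.level (n + n) := by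
  have h : cMat z 0 = dSum z z := by rw [cMat_eq_blocks, neg_zero]; rfl
  exact h ▸ K.dSum_mem hz hz

/-- Multiplication by `-i` on `ℝᵈ ⊕ ℝᵈ ≅ ℂᵈ`, the identification under which `cMat x y` acts as
`x + iy`. -/
def complexStructure (d : ℕ) : Matrix (Fin (d + d)) (Fin (d + d)) ℝ := blocks 0 1 (-1) 0

theorem rComm_complexStructure_cMat (x y : Matrix (Fin d) (Fin d) E) :
    RComm (complexStructure d) (cMat x y) := by
  rw [RComm, complexStructure, cMat_eq_blocks, lmul_blocks_blocks, rmulE_blocks_blocks]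
  simp

theorem transpose_stack_mul_complexStructure_mul_stack
    (a b : Matrix (Fin d) (Fin n) ℝ) :
    (stack a b)ᵀ * complexStructure d * stack a b = aᵀ * b - bᵀ * a := by
  rw [Matrix.mul_assoc, complexStructure, blocks_mul_stack, transpose_stack_mul_stack]
  simp [sub_eq_add_neg]

theorem compress_stack_cMat (a b : Matrix (Fin d) (Fin n) ℝ)
    (x y : Matrix (Fin d) (Fin d) E) :
    compress (stack a b) (cMat x y) = (compressC a b x y).1 := by
  rw [compress, cMat_eq_blocks, rmulE_blocks_stack, lmul_transpose_stack_stack, rmulE_neg_left,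
    ← sub_eq_add_neg]
  rfl

theorem compress_stack_lmul_cMat (a b : Matrix (Fin d) (Fin n) ℝ)
    (x y : Matrix (Fin d) (Fin d) E) :
    compress (stack a b) (lmul (complexStructure d) (cMat x y)) = (compressC a b x y).2 := by
  rw [compress, complexStructure, cMat_eq_blocks, lmul_blocks_blocks, rmulE_blocks_stack,
    lmul_transpose_stack_stack]
  simp only [compressC, lmul_zero_left, lmul_one, lmul_neg_left, lmul_neg_right, zero_add,
    add_zero, neg_neg, neg_zero, rmulE_neg_left, neg_add_eq_sub]
  rw [sub_eq_add_neg _ (lmul _ _), ← lmul_neg_right, neg_sub]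

theorem cCommC_of_rComm_stack {a b : Matrix (Fin d) (Fin n) ℝ}
    {x y : Matrix (Fin d) (Fin d) E} (h : RComm (stack a b * (stack a b)ᵀ) (cMat x y)) :
    CCommC (a * aᵀ + b * bᵀ) (b * aᵀ - a * bᵀ) x y := by
  rw [RComm, stack_mul_transpose_stack, cMat_eq_blocks, lmul_blocks_blocks,
    rmulE_blocks_blocks] at h
  obtain ⟨h11, h12, h21, h22⟩ := blocks_inj h
  simp only [lmul_neg_right, rmulE_neg_left] at h11 h12 h21 h22
  simp only [CCommC, lmul_add_left, lmul_sub_left, rmulE_add_right, rmulE_sub_right]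
  constructor
  · linear_combination (norm := abel) h11 + h22
  · linear_combination (norm := abel) h21 - h12

theorem compressC_zero_zero (a : Matrix (Fin d) (Fin n) ℝ)
    (z : Matrix (Fin d) (Fin d) E) : compressC a 0 z 0 = (compress a z, 0) := by
  simp [compressC, compress]

theorem compressC_of_rComm {a b : Matrix (Fin n) (Fin n) ℝ} {x : Matrix (Fin n) (Fin n) E}
    (ha : RComm a x) (hb : RComm b x) :
    compressC a b x 0 = (lmul (aᵀ * a + bᵀ * b) x, lmul (aᵀ * b - bᵀ * a) x) := by
  have ha' : rmulE x a = lmul a x := ha.symm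
  have hb' : rmulE x b = lmul b x := hb.symm
  simp only [compressC, rmulE_zero_left, sub_zero, zero_add, ha', hb', lmul_add_left,
    lmul_sub_left, lmul_mul]

end Complexification

section ComplexMatrix

variable {l m n : Type*}

theorem map_re_mul [Fintype m] (A : Matrix l m ℂ) (B : Matrix m n ℂ) :
    (A * B).map Complex.re =
      A.map Complex.re * B.map Complex.re - A.map Complex.im * B.map Complex.im := by
  ext i j
  simp [Matrix.mul_apply, Complex.re_sum, Finset.sum_sub_distrib]

theorem map_im_mul [Fintype m] (A : Matrix l m ℂ) (B : Matrix m n ℂ) :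
    (A * B).map Complex.im =
      A.map Complex.re * B.map Complex.im + A.map Complex.im * B.map Complex.re := by
  ext i j
  simp [Matrix.mul_apply, Complex.im_sum, Finset.sum_add_distrib]

theorem map_re_conjTranspose (A : Matrix m n ℂ) : Aᴴ.map Complex.re = (A.map Complex.re)ᵀ := by
  ext i j; simp

theorem map_im_conjTranspose (A : Matrix m n ℂ) : Aᴴ.map Complex.im = -(A.map Complex.im)ᵀ := by
  ext i j; simp

theorem map_re_conjTranspose_mul [Fintype m] (A : Matrix m l ℂ) (B : Matrix m n ℂ) :
    (Aᴴ * B).map Complex.re =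
      (A.map Complex.re)ᵀ * B.map Complex.re + (A.map Complex.im)ᵀ * B.map Complex.im := by
  rw [map_re_mul, map_re_conjTranspose, map_im_conjTranspose, Matrix.neg_mul, sub_neg_eq_add]

theorem map_im_conjTranspose_mul [Fintype m] (A : Matrix m l ℂ) (B : Matrix m n ℂ) :
    (Aᴴ * B).map Complex.im =
      (A.map Complex.re)ᵀ * B.map Complex.im - (A.map Complex.im)ᵀ * B.map Complex.re := by
  rw [map_im_mul, map_re_conjTranspose, map_im_conjTranspose, Matrix.neg_mul, ← sub_eq_add_neg]

theorem map_re_smul (c : ℝ) (A : Matrix m n ℂ) : (c • A).map Complex.re = c • A.map Complex.re := by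
  ext i j; simp

theorem map_im_smul (c : ℝ) (A : Matrix m n ℂ) : (c • A).map Complex.im = c • A.map Complex.im := by
  ext i j; simp

theorem map_re_sum {N : ℕ} (A : Fin N → Matrix m n ℂ) :
    (∑ j, A j).map Complex.re = ∑ j, (A j).map Complex.re :=
  map_sum Complex.reAddGroupHom.mapMatrix A Finset.univ

theorem map_im_sum {N : ℕ} (A : Fin N → Matrix m n ℂ) :
    (∑ j, A j).map Complex.im = ∑ j, (A j).map Complex.im :=
  map_sum Complex.imAddGroupHom.mapMatrix A Finset.univ

theorem ext_map_re_im {A B : Matrix m n ℂ} (hre : A.map Complex.re = B.map Complex.re)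
    (him : A.map Complex.im = B.map Complex.im) : A = B := by
  ext i j
  exact Complex.ext (congr_fun₂ hre i j) (congr_fun₂ him i j)

variable [DecidableEq m]

theorem map_re_one : (1 : Matrix m m ℂ).map Complex.re = 1 := by
  ext i j; by_cases h : i = j <;> simp [Matrix.one_apply, h]

theorem map_im_one : (1 : Matrix m m ℂ).map Complex.im = 0 := by
  ext i j; by_cases h : i = j <;> simp [h]

theorem map_re_ofReal_smul_one (c : ℝ) : ((c : ℂ) • (1 : Matrix m m ℂ)).map Complex.re = c • 1 := by
  rw [Complex.coe_smul, map_re_smul, map_re_one]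

theorem map_im_ofReal_smul_one (c : ℝ) : ((c : ℂ) • (1 : Matrix m m ℂ)).map Complex.im = 0 := by
  rw [Complex.coe_smul, map_im_smul, map_im_one, smul_zero]

end ComplexMatrix

section ComplexCommutant

variable {E : Type*} [AddCommGroup E] [Module ℝ E]

def cCommutant {n : ℕ} (x : Matrix (Fin n) (Fin n) E) :
    Subalgebra ℝ (Matrix (Fin n) (Fin n) ℂ) where
  carrier := {T | T.map Complex.re ∈ rCommutant x ∧ T.map Complex.im ∈ rCommutant x}
  mul_mem' {T S} hT hS := by
    refine ⟨?_, ?_⟩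
    · rw [map_re_mul]
      exact sub_mem (mul_mem hT.1 hS.1) (mul_mem hT.2 hS.2)
    · rw [map_im_mul]
      exact add_mem (mul_mem hT.1 hS.2) (mul_mem hT.2 hS.1)
  add_mem' {T S} hT hS := by
    refine ⟨?_, ?_⟩
    · rw [Matrix.map_add _ Complex.add_re]
      exact add_mem hT.1 hS.1
    · rw [Matrix.map_add _ Complex.add_im]
      exact add_mem hT.2 hS.2
  algebraMap_mem' c := by
    rw [Algebra.algebraMap_eq_smul_one, Set.mem_ofPred_eq, map_re_smul, map_im_smul, map_re_one,
      map_im_one, smul_zero, ← Algebra.algebraMap_eq_smul_one]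
    exact ⟨algebraMap_mem _ c, zero_mem _⟩

theorem mem_cCommutant {n : ℕ} {T : Matrix (Fin n) (Fin n) ℂ} {x : Matrix (Fin n) (Fin n) E} :
    T ∈ cCommutant x ↔ RComm (T.map Complex.re) x ∧ RComm (T.map Complex.im) x := Iff.rfl

end ComplexCommutant

theorem exists_isHermitian_idempotent_mem {ι : Type*} [Fintype ι] [DecidableEq ι]
    {S : Subalgebra ℝ (Matrix ι ι ℂ)}
    {T : Matrix ι ι ℂ} (hT : T.IsHermitian) (hTS : T ∈ S)
    (hns : ∀ c : ℝ, T ≠ (c : ℂ) • 1) :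
    ∃ P ∈ S, P.IsHermitian ∧ P * P = P ∧ P ≠ 0 ∧ P ≠ 1 := by
  have hsa : IsSelfAdjoint T := hT
  have hfin : (spectrum ℝ T).Finite := Matrix.finite_real_spectrum
  obtain ⟨μ, hμ, ν, hν, hμν⟩ : ∃ μ ∈ spectrum ℝ T, ∃ ν ∈ spectrum ℝ T, μ ≠ ν := by
    by_contra! h
    obtain ⟨c, hc⟩ : ∃ c, spectrum ℝ T ⊆ {c} := by
      rcases (spectrum ℝ T).eq_empty_or_nonempty with he | ⟨c, hc⟩
      · exact ⟨0, he ▸ Set.empty_subset _⟩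
      · exact ⟨c, fun t ht => h t ht c hc⟩
    refine hns c ?_
    calc T = cfc id T := (cfc_id ℝ T).symm
      _ = cfc (fun _ => c) T := cfc_congr fun t ht => hc ht
      _ = (c : ℂ) • 1 := by rw [cfc_const c T, Algebra.algebraMap_eq_smul_one, Complex.coe_smul]
  set g : ℝ → ℝ := fun t => if t = μ then 1 else 0
  have hgc : ContinuousOn g (spectrum ℝ T) := hfin.continuousOn _
  obtain ⟨q, hq⟩ : ∃ q : Polynomial ℝ, (spectrum ℝ T).EqOn g q.eval :=
    ⟨Lagrange.interpolate hfin.toFinset id g, fun t ht =>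
      (Lagrange.eval_interpolate_at_node g (Set.injOn_id _) (hfin.mem_toFinset.mpr ht)).symm⟩
  refine ⟨cfc g T, ?_, cfc_predicate g T, ?_, fun h0 => ?_, fun h1 => ?_⟩
  · rw [cfc_congr hq, cfc_polynomial q T]
    exact Algebra.adjoin_le (Set.singleton_subset_iff.mpr hTS)
      (Polynomial.aeval_mem_adjoin_singleton ℝ T)
  · rw [← cfc_mul g g T]
    exact cfc_congr fun t _ => by by_cases h : t = μ <;> simp [g, h]
  · rw [← cfc_zero ℝ T] at h0
    simpa [g] using eqOn_of_cfc_eq_cfc h0 hgc (by fun_prop) hsa hμ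
  · rw [← cfc_one ℝ T] at h1
    simpa [g, hμν.symm] using eqOn_of_cfc_eq_cfc h1 hgc (by fun_prop) hsa hν

theorem pos_of_posSemidef_of_eq_smul_one {ι : Type*} [DecidableEq ι] {T : Matrix ι ι ℂ}
    (hT : T.PosSemidef) (hT0 : T ≠ 0) {c : ℝ} (hc : T = (c : ℂ) • 1) : 0 < c := by
  obtain ⟨i, -, -⟩ : ∃ i j, T i j ≠ 0 := by
    by_contra! h
    exact hT0 (Matrix.ext h)
  have hci : (0 : ℂ) ≤ c := by simpa [hc] using hT.diag_nonneg (i := i)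
  refine lt_of_le_of_ne (Complex.zero_le_real.mp hci) ?_
  rintro rfl
  exact hT0 (by simp [hc])

theorem eq_zero_or_eq_one_of_isIdempotentElem_of_eq_smul_one {𝕜 A : Type*} [Field 𝕜] [Ring A]
    [Algebra 𝕜 A] {P : A} (hP : IsIdempotentElem P) {z : 𝕜} (hz : P = z • 1) : P = 0 ∨ P = 1 := by
  have h : (z * (z - 1)) • (1 : A) = 0 := by
    rw [mul_sub, mul_one, sub_smul, ← smul_smul, ← hz, sub_eq_zero]
    calc z • P = z • 1 * P := by rw [smul_mul_assoc, one_mul]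
      _ = P := by rw [← hz, hP.eq]
  rcases smul_eq_zero.mp h with h | h
  · rcases mul_eq_zero.mp h with h0 | h1
    · exact Or.inl (by rw [hz, h0, zero_smul])
    · exact Or.inr (by rw [hz, sub_eq_zero.mp h1, one_smul])
  · exact Or.inl (by rw [← mul_one P, h, mul_zero])

section Extreme

variable {E : Type*} [AddCommGroup E] [Module ℝ E] {K : NCConvexSet E} {n : ℕ}
  {x : Matrix (Fin n) (Fin n) E}

theorem CIrred.eq_zero_of_rComm (hx : CIrred x)
    {δ : Matrix (Fin n) (Fin n) ℝ} (hanti : δᵀ = -δ) (hδ : RComm δ x) : δ = 0 := by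
  -- `(1 + iδ)ᴴ (1 + iδ)` is positive, commutes with `x`, and has imaginary part `2δ`.
  let A : Matrix (Fin n) (Fin n) ℂ :=
    Matrix.of fun i j => ⟨(1 : Matrix (Fin n) (Fin n) ℝ) i j, δ i j⟩
  have hre : (Aᴴ * A).map Complex.re = 1 + δᵀ * δ := by
    rw [map_re_conjTranspose_mul, show A.map Complex.re = 1 from rfl, Matrix.transpose_one,
      Matrix.one_mul]
    rfl
  have him : (Aᴴ * A).map Complex.im = (2 : ℝ) • δ := by
    rw [map_im_conjTranspose_mul, show A.map Complex.re = 1 from rfl, Matrix.transpose_one,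
      Matrix.one_mul, Matrix.mul_one]
    change δ - δᵀ = _
    rw [hanti, sub_neg_eq_add, two_smul]
  have hδ' : δ ∈ rCommutant x := hδ
  have hA : Aᴴ * A ∈ cCommutant x := by
    rw [mem_cCommutant, hre, him]
    exact ⟨add_mem (one_mem _) (mul_mem (hanti ▸ neg_mem hδ') hδ'), Subalgebra.smul_mem _ hδ' 2⟩
  have h2δ : (2 : ℝ) • δ = 0 := by
    rw [← him]
    by_cases hA0 : Aᴴ * A = 0
    · rw [hA0]; ext; simp
    · obtain ⟨c, -, hc⟩ := hx _ (Matrix.posSemidef_conjTranspose_mul_self A) hA0 hA.1 hA.2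
      rw [hc, map_im_ofReal_smul_one]
  exact (smul_eq_zero.mp h2δ).resolve_left two_ne_zero

theorem IsCExtremeInC.conjTranspose_mul_self_eq_smul_one (hx : x ∈ K.level n)
    (hce : IsCExtremeInC K x 0) {N : ℕ} (A : Fin N → Matrix (Fin n) (Fin n) ℂ)
    (hA : ∀ j, A j ∈ cCommutant x) (hA0 : ∀ j, A j ≠ 0) (hsum : ∑ j, (A j)ᴴ * A j = 1) (j : Fin N) :
    ∃ c : ℝ, (A j)ᴴ * A j = (c : ℂ) • 1 := by
  have hcomp : ∀ j, compressC ((A j).map Complex.re) ((A j).map Complex.im) x 0 =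
      (lmul (((A j)ᴴ * A j).map Complex.re) x, lmul (((A j)ᴴ * A j).map Complex.im) x) :=
    fun j => by
      rw [compressC_of_rComm (hA j).1 (hA j).2, map_re_conjTranspose_mul, map_im_conjTranspose_mul]
  obtain ⟨c, βa, βb, -, hβ, ha, hb, -⟩ := hce N (fun _ => n) (fun _ => x) (fun _ => 0)
    (fun j => (A j).map Complex.re) (fun j => (A j).map Complex.im) (fun _ => cMat_zero_mem hx)
    (fun j h => hA0 j (ext_map_re_im (by simpa using h.1) (by simpa using h.2)))
    (by simp only [← map_re_conjTranspose_mul, ← map_re_sum, hsum, map_re_one])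
    (by simp only [← map_im_conjTranspose_mul, ← map_im_sum, hsum, map_im_one])
    (by simp only [hcomp, ← sum_lmul, ← map_re_sum, hsum, map_re_one, lmul_one])
    (by simp only [hcomp, ← sum_lmul, ← map_im_sum, hsum, map_im_one, lmul_zero_left]) j
  refine ⟨c * c, ext_map_re_im ?_ ?_⟩
  · rw [map_re_conjTranspose_mul, map_re_ofReal_smul_one, ha, hb, ← hβ.1]
    simp only [Matrix.transpose_smul, Matrix.smul_mul, Matrix.mul_smul, smul_smul, smul_add]
  · rw [map_im_conjTranspose_mul, map_im_ofReal_smul_one, ha, hb, ← smul_zero (c * c), ← hβ.2]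
    simp only [Matrix.transpose_smul, Matrix.smul_mul, Matrix.mul_smul, smul_smul, smul_sub]

theorem cIrred_of_isCExtremeInC (hx : x ∈ K.level n) (hce : IsCExtremeInC K x 0) : CIrred x := by
  intro T hT hT0 hre him
  by_contra hns
  obtain ⟨P, hP, hPH, hP2, hP0, hP1⟩ := exists_isHermitian_idempotent_mem hT.1
    (show T ∈ cCommutant x from ⟨hre, him⟩)
    fun c hc => hns ⟨c, pos_of_posSemidef_of_eq_smul_one hT hT0 hc, hc⟩
  have hPP : Pᴴ * P = P := by rw [hPH.eq, hP2]
  have hQQ : (1 - P)ᴴ * (1 - P) = 1 - P := by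
    rw [Matrix.conjTranspose_sub, Matrix.conjTranspose_one, hPH.eq,
      (IsIdempotentElem.one_sub hP2).eq]
  obtain ⟨c, hc⟩ := hce.conjTranspose_mul_self_eq_smul_one hx ![P, 1 - P]
    (Fin.forall_fin_two.mpr ⟨hP, sub_mem (one_mem _) hP⟩)
    (Fin.forall_fin_two.mpr ⟨hP0, sub_ne_zero.mpr hP1.symm⟩)
    (by simp only [Fin.sum_univ_two, Matrix.cons_val_zero, Matrix.cons_val_one, hPP, hQQ,
      add_sub_cancel]) 0
  rw [Matrix.cons_val_zero, hPP] at hc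
  exact (eq_zero_or_eq_one_of_isIdempotentElem_of_eq_smul_one hP2 hc).elim hP0 hP1

theorem isCExtremeInC_of_isExtremeIn_of_cIrred (hext : IsExtremeIn K x) (hirr : CIrred x) :
    IsCExtremeInC K x 0 := by
  intro N d xs ys as bs hmem hnz hsum _ hval _ i
  obtain ⟨c, β, hc, hβ, hαβ, hβx, hβM⟩ := hext N (fun j => d j + d j)
    (fun j => cMat (xs j) (ys j)) (fun j => stack (as j) (bs j)) hmem
    (fun j h => hnz j (stack_eq_zero_iff.mp h))
    (by simpa only [transpose_stack_mul_stack] using hsum)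
    (by simpa only [compress_stack_cMat] using hval) i
  set a := c⁻¹ • as i
  set b := c⁻¹ • bs i
  have hca : as i = c • a := by simp [a, smul_smul, hc.ne']
  have hcb : bs i = c • b := by simp [b, smul_smul, hc.ne']
  obtain rfl : β = stack a b := by
    rw [stack_smul, hαβ, smul_smul, inv_mul_cancel₀ hc.ne', one_smul]
  have hJ : RComm (aᵀ * b - bᵀ * a) x := by
    rw [← transpose_stack_mul_complexStructure_mul_stack, ← hβx]
    exact hβM.compress hβ (rComm_complexStructure_cMat _ _)
  have hδ : aᵀ * b - bᵀ * a = 0 := hirr.eq_zero_of_rComm (by simp) hJ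
  refine ⟨c, a, b, hc, ⟨by rwa [← transpose_stack_mul_stack], hδ⟩, hca, hcb,
    Prod.ext (by rw [← compress_stack_cMat, hβx]) ?_, cCommC_of_rComm_stack hβM⟩
  rw [← compress_stack_lmul_cMat, compress_lmul_of_rComm hβ hβM, hβx,
    transpose_stack_mul_complexStructure_mul_stack, hδ, lmul_zero_left]

theorem isExtremeIn_of_isCExtremeInC (hce : IsCExtremeInC K x 0) : IsExtremeIn K x := by
  intro N d xs αs hxs hα0 hsum hval i
  obtain ⟨c, βa, βb, hc, ⟨hβ, -⟩, hα, hb, hβx, hcomm, -⟩ := hce N d xs (fun _ => 0) αs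
    (fun _ => 0) (fun j => cMat_zero_mem (hxs j)) (fun j h => hα0 j h.1) (by simpa using hsum)
    (by simp) (by simpa [compressC_zero_zero] using hval) (by simp [compressC_zero_zero]) i
  obtain rfl : βb = 0 := (smul_eq_zero.mp hb.symm).resolve_left hc.ne'
  refine ⟨c, βa, hc, show βaᵀ * βa = 1 by simpa using hβ, hα,
    by simpa [compressC_zero_zero] using hβx, ?_⟩
  change lmul (βa * βaᵀ) (xs i) = rmulE (xs i) (βa * βaᵀ)
  simpa using hcomm

theorem cIrred_of_fin_one (x : Matrix (Fin 1) (Fin 1) E) : CIrred x := by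
  intro T hT hT0 _ _
  have hc : T = ((T 0 0).re : ℂ) • 1 := by
    ext i j
    fin_cases i; fin_cases j
    simpa using (hT.1.coe_re_apply_self 0).symm
  exact ⟨_, pos_of_posSemidef_of_eq_smul_one hT hT0 hc, hc⟩

end Extreme

theorem extreme_in_complexification_iff_complex_irreducible_general
    (E : Type) [AddCommGroup E] [Module ℝ E]
    (K : NCConvexSet E) :
    (∀ {n : ℕ} (x : Matrix (Fin n) (Fin n) E), x ∈ K.level n → IsExtremeIn K x →
      (IsCExtremeInC K x 0 ↔ CIrred x)) ∧
    (∀ x : Matrix (Fin 1) (Fin 1) E, x ∈ K.level 1 →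
      (IsExtremeIn K x ↔ IsCExtremeInC K x 0)) :=
  ⟨fun _ hx hext => ⟨cIrred_of_isCExtremeInC hx, isCExtremeInC_of_isExtremeIn_of_cIrred hext⟩,
    fun x _ => ⟨fun hext => isCExtremeInC_of_isExtremeIn_of_cIrred hext (cIrred_of_fin_one x),
      isExtremeIn_of_isCExtremeInC⟩⟩

/-- For `K` a real compact nc convex set: if `x ∈ K_n` is extreme
in `K`, then `x` is extreme in `K_c` if and only if `x` is complex-irreducible.
In particular, `x ∈ K_1` is nc extreme in `K` iff `x + i0` is nc extreme in `K_c`. -/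
theorem extreme_in_complexification_iff_complex_irreducible
    (E : Type) [AddCommGroup E] [Module ℝ E] [TopologicalSpace E]
    (K : NCConvexSet E) (hK : K.IsCompactSet) :
    (∀ {n : ℕ} (x : Matrix (Fin n) (Fin n) E), x ∈ K.level n → IsExtremeIn K x →
      (IsCExtremeInC K x 0 ↔ CIrred x)) ∧
    (∀ x : Matrix (Fin 1) (Fin 1) E, x ∈ K.level 1 →
      (IsExtremeIn K x ↔ IsCExtremeInC K x 0)) :=
  extreme_in_complexification_iff_complex_irreducible_general E K

end NCC
end
end
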